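/- Lemma (Syntactic Substitution for λ_ert): If Γ ⊢' σ : Δ is a well-formed substitution and Γ ⊢ a : A, then Δ ⊢ [σ]a : [σ]A; similarly, if Γ ⊢ p : φ then Δ ⊢ [σ]p : [σ]φ. -/
import Mathlib


set_option autoImplicit true

namespace Ert

/-- Syntax of λ_ert: types, propositions, terms and proofs, folded into a single
inductive (as in the paper's formalization), using de Bruijn indices. -/
inductive Tm : Type
  -- types
  | unit | nat
  | pi (A B : Tm)        -- (x : A) → B, B binds one variable
  | sigma (A B : Tm)     -- (x : A) × B
  | coprod (A B : Tm)    -- A + B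
  | set (A φ : Tm)       -- {x : A | φ}
  | pre (φ A : Tm)       -- (u : φ) ⇒ A, precondition type
  | inter (A B : Tm)     -- ∀ x : A, B, intersection type
  | union (A B : Tm)     -- ∃ x : A, B, union type
  -- propositions
  | top | bot
  | dimp (φ ψ : Tm)      -- (u : φ) ⇒ ψ
  | dand (φ ψ : Tm)      -- (u : φ) ∧ ψ
  | or (φ ψ : Tm)        -- φ ∨ ψ
  | all (A φ : Tm)       -- ∀ x : A, φ
  | ex (A φ : Tm)        -- ∃ x : A, φ
  | eq (A a b : Tm)      -- a =_A b
  -- terms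
  | var (n : ℕ) | nil
  | lam (A e : Tm) | app (f a : Tm)
  | pair (a b : Tm) | letPair (C e e' : Tm)   -- let (x,y) : [z ↦ C] = e in e'
  | inl (a : Tm) | inr (a : Tm)
  | cases (C e l r : Tm)                       -- cases [x ↦ C] e (inl y ↦ l) (inr z ↦ r)
  | lamPr (φ e : Tm) | appPr (f p : Tm)        -- λ u : φ, e ; f p
  | elem (a p : Tm) | letSet (C e e' : Tm)     -- {a, p} ; let {x,u} = e in e'
  | lamIr (A e : Tm) | appIr (f a : Tm)        -- λ ‖x:A‖, e ; f ‖a‖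
  | repr (a b : Tm) | letRepr (C e e' : Tm)    -- (‖a‖, b) ; let (‖x‖,y) = e in e'
  | zero | succ
  | natrec (C e z s : Tm)                      -- natrec [n ↦ C] e z (‖succ n‖, y ↦ s)
  | abort (p : Tm)                             -- absurd p (into a type)
  -- proofs
  | triv                                       -- ⟨⟩ : ⊤
  | pabort (p : Tm)                            -- absurd p (into a proposition)
  | plam (φ p : Tm) | pmp (p q : Tm)           -- λ̂ u : φ, p ; modus ponens
  | pconj (p q : Tm) | pletConj (θ p q : Tm)
  | porl (p : Tm) | porr (p : Tm) | pcasesOr (θ p l r : Tm)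
  | pgen (A p : Tm) | pspec (p a : Tm)         -- λ̂ ‖x:A‖, p ; p ‖a‖
  | pwit (a p : Tm) | pletWit (ψ p q : Tm)     -- ⟨‖a‖, p⟩ ; let ⟨‖x‖,u⟩ = p in q
  | pletPair (φ e q : Tm) | pletSet (φ e q : Tm) | pletRepr (φ e q : Tm)
  | psubst (φ a b p q : Tm)                    -- subst [x ↦ φ][a][b] p q
  | pcases (φ e l r : Tm) | pind (φ e z s : Tm)
  -- axioms
  | prfl (a : Tm) | puniq (a : Tm) | pdiscr (a b p : Tm)
  | pbetaPr (e p : Tm) | pbetaTy (e a : Tm) | pbetaIr (e a : Tm)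
  | pbetaLeft (C l r a : Tm) | pbetaRight (C l r b : Tm)
  | pbetaZero (C z s : Tm) | pbetaSucc (C e z s : Tm)
  | pbetaPair (a b e : Tm) | pbetaSet (a p e : Tm) | pbetaRepr (a b e : Tm)
  | petaTy (f : Tm)
  | pirPr (e p q : Tm) | pirTy (e a b : Tm)
  | petaIr (f g i p : Tm) | petaPr (f g i p : Tm)

namespace Tm

/-- Generic traversal acting on variables, tracking the number `d` of binders crossed. -/
def tmap (v : ℕ → ℕ → Tm) : ℕ → Tm → Tm
  | _, .unit => .unit
  | _, .nat => .nat
  | d, .pi A B => .pi (tmap v d A) (tmap v (d+1) B)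
  | d, .sigma A B => .sigma (tmap v d A) (tmap v (d+1) B)
  | d, .coprod A B => .coprod (tmap v d A) (tmap v d B)
  | d, .set A φ => .set (tmap v d A) (tmap v (d+1) φ)
  | d, .pre φ A => .pre (tmap v d φ) (tmap v (d+1) A)
  | d, .inter A B => .inter (tmap v d A) (tmap v (d+1) B)
  | d, .union A B => .union (tmap v d A) (tmap v (d+1) B)
  | _, .top => .top
  | _, .bot => .bot
  | d, .dimp φ ψ => .dimp (tmap v d φ) (tmap v (d+1) ψ)
  | d, .dand φ ψ => .dand (tmap v d φ) (tmap v (d+1) ψ)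
  | d, .or φ ψ => .or (tmap v d φ) (tmap v d ψ)
  | d, .all A φ => .all (tmap v d A) (tmap v (d+1) φ)
  | d, .ex A φ => .ex (tmap v d A) (tmap v (d+1) φ)
  | d, .eq A a b => .eq (tmap v d A) (tmap v d a) (tmap v d b)
  | d, .var n => v d n
  | _, .nil => .nil
  | d, .lam A e => .lam (tmap v d A) (tmap v (d+1) e)
  | d, .app f a => .app (tmap v d f) (tmap v d a)
  | d, .pair a b => .pair (tmap v d a) (tmap v d b)
  | d, .letPair C e e' => .letPair (tmap v (d+1) C) (tmap v d e) (tmap v (d+2) e')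
  | d, .inl a => .inl (tmap v d a)
  | d, .inr a => .inr (tmap v d a)
  | d, .cases C e l r => .cases (tmap v (d+1) C) (tmap v d e) (tmap v (d+1) l) (tmap v (d+1) r)
  | d, .lamPr φ e => .lamPr (tmap v d φ) (tmap v (d+1) e)
  | d, .appPr f p => .appPr (tmap v d f) (tmap v d p)
  | d, .elem a p => .elem (tmap v d a) (tmap v d p)
  | d, .letSet C e e' => .letSet (tmap v (d+1) C) (tmap v d e) (tmap v (d+2) e')
  | d, .lamIr A e => .lamIr (tmap v d A) (tmap v (d+1) e)
  | d, .appIr f a => .appIr (tmap v d f) (tmap v d a)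
  | d, .repr a b => .repr (tmap v d a) (tmap v d b)
  | d, .letRepr C e e' => .letRepr (tmap v (d+1) C) (tmap v d e) (tmap v (d+2) e')
  | _, .zero => .zero
  | _, .succ => .succ
  | d, .natrec C e z s => .natrec (tmap v (d+1) C) (tmap v d e) (tmap v d z) (tmap v (d+2) s)
  | d, .abort p => .abort (tmap v d p)
  | _, .triv => .triv
  | d, .pabort p => .pabort (tmap v d p)
  | d, .plam φ p => .plam (tmap v d φ) (tmap v (d+1) p)
  | d, .pmp p q => .pmp (tmap v d p) (tmap v d q)
  | d, .pconj p q => .pconj (tmap v d p) (tmap v d q)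
  | d, .pletConj θ p q => .pletConj (tmap v (d+1) θ) (tmap v d p) (tmap v (d+2) q)
  | d, .porl p => .porl (tmap v d p)
  | d, .porr p => .porr (tmap v d p)
  | d, .pcasesOr θ p l r =>
      .pcasesOr (tmap v (d+1) θ) (tmap v d p) (tmap v (d+1) l) (tmap v (d+1) r)
  | d, .pgen A p => .pgen (tmap v d A) (tmap v (d+1) p)
  | d, .pspec p a => .pspec (tmap v d p) (tmap v d a)
  | d, .pwit a p => .pwit (tmap v d a) (tmap v d p)
  | d, .pletWit ψ p q => .pletWit (tmap v (d+1) ψ) (tmap v d p) (tmap v (d+2) q)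
  | d, .pletPair φ e q => .pletPair (tmap v (d+1) φ) (tmap v d e) (tmap v (d+2) q)
  | d, .pletSet φ e q => .pletSet (tmap v (d+1) φ) (tmap v d e) (tmap v (d+2) q)
  | d, .pletRepr φ e q => .pletRepr (tmap v (d+1) φ) (tmap v d e) (tmap v (d+2) q)
  | d, .psubst φ a b p q =>
      .psubst (tmap v (d+1) φ) (tmap v d a) (tmap v d b) (tmap v d p) (tmap v d q)
  | d, .pcases φ e l r => .pcases (tmap v (d+1) φ) (tmap v d e) (tmap v (d+1) l) (tmap v (d+1) r)
  | d, .pind φ e z s => .pind (tmap v (d+1) φ) (tmap v d e) (tmap v d z) (tmap v (d+2) s)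
  | d, .prfl a => .prfl (tmap v d a)
  | d, .puniq a => .puniq (tmap v d a)
  | d, .pdiscr a b p => .pdiscr (tmap v d a) (tmap v d b) (tmap v d p)
  | d, .pbetaPr e p => .pbetaPr (tmap v (d+1) e) (tmap v d p)
  | d, .pbetaTy e a => .pbetaTy (tmap v (d+1) e) (tmap v d a)
  | d, .pbetaIr e a => .pbetaIr (tmap v (d+1) e) (tmap v d a)
  | d, .pbetaLeft C l r a =>
      .pbetaLeft (tmap v (d+1) C) (tmap v (d+1) l) (tmap v (d+1) r) (tmap v d a)
  | d, .pbetaRight C l r b =>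
      .pbetaRight (tmap v (d+1) C) (tmap v (d+1) l) (tmap v (d+1) r) (tmap v d b)
  | d, .pbetaZero C z s => .pbetaZero (tmap v (d+1) C) (tmap v d z) (tmap v (d+2) s)
  | d, .pbetaSucc C e z s => .pbetaSucc (tmap v (d+1) C) (tmap v d e) (tmap v d z) (tmap v (d+2) s)
  | d, .pbetaPair a b e => .pbetaPair (tmap v d a) (tmap v d b) (tmap v (d+2) e)
  | d, .pbetaSet a p e => .pbetaSet (tmap v d a) (tmap v d p) (tmap v (d+2) e)
  | d, .pbetaRepr a b e => .pbetaRepr (tmap v d a) (tmap v d b) (tmap v (d+2) e)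
  | d, .petaTy f => .petaTy (tmap v d f)
  | d, .pirPr e p q => .pirPr (tmap v (d+1) e) (tmap v d p) (tmap v d q)
  | d, .pirTy e a b => .pirTy (tmap v d e) (tmap v d a) (tmap v d b)
  | d, .petaIr f g i p => .petaIr (tmap v d f) (tmap v d g) (tmap v d i) (tmap v (d+1) p)
  | d, .petaPr f g i p => .petaPr (tmap v d f) (tmap v d g) (tmap v d i) (tmap v (d+1) p)

/-- Renaming of de Bruijn variables. -/
def rename (t : Tm) (ρ : ℕ → ℕ) : Tm :=
  t.tmap (fun d n => if n < d then .var n else .var (ρ (n - d) + d)) 0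

/-- Weakening: shift all free variables up by one. -/
def wk0 (t : Tm) : Tm := t.rename Nat.succ

/-- Capture-avoiding substitution `[σ]t` for a substitution `σ : Var → Tm`. -/
def subst (t : Tm) (σ : ℕ → Tm) : Tm :=
  t.tmap (fun d n => if n < d then .var n else (σ (n - d)).rename (· + d)) 0

/-- Substitute `v` for variable 0, mapping the remaining variables `n+1 ↦ n+k`
(used to state rules such as `[(x, y)/z]C` with `k = 2`). -/
def substK (t v : Tm) (k : ℕ) : Tm :=
  t.subst fun n => match n with | 0 => v | n+1 => .var (n+k)

/-- Substitution `[v/x]t` of `v` for the most recently bound variable. -/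
def subst0 (t v : Tm) : Tm := t.substK v 0

/-- Simultaneous substitution `[v1/x][v0/y]t` for the two most recently bound variables. -/
def subst2 (t v1 v0 : Tm) : Tm :=
  t.subst fun n => match n with | 0 => v0 | 1 => v1 | n+2 => .var n

end Tm

/-- Hypothesis kinds: computational (`x : A`) or ghost (`‖x : A‖`). -/
inductive HypKind : Type
  | comp | ghost

/-- Context hypotheses: a typed (computational or ghost) variable, or a
propositional hypothesis `u : φ`. -/
inductive Hyp : Type
  | tm (k : HypKind) (A : Tm)
  | pf (φ : Tm)

/-- A context is a list of hypotheses, most recent first. -/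
abbrev Ctx := List Hyp

def Hyp.wk : Hyp → Hyp
  | .tm k A => .tm k A.wk0
  | .pf φ => .pf φ.wk0

/-- `HasVar Γ n H`: de Bruijn variable `n` is declared in `Γ` with hypothesis `H`
(whose payload is already weakened to live in `Γ`). -/
inductive HasVar : Ctx → ℕ → Hyp → Prop
  | head {Γ : Ctx} {H : Hyp} : HasVar (H :: Γ) 0 H.wk
  | tail {Γ : Ctx} {H H' : Hyp} {n : ℕ} : HasVar Γ n H → HasVar (H' :: Γ) (n+1) H.wk

/-- The full upgrade `↑Γ` of a context: every ghost hypothesis becomes computational. -/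
def upg : Ctx → Ctx
  | [] => []
  | .tm _ A :: Γ => .tm .comp A :: upg Γ
  | .pf φ :: Γ => .pf φ :: upg Γ

/-- Typing annotations: the four judgments `Γ ⊢ A ty`, `Γ ⊢ φ pr`,
`Γ ⊢ a : A`, and `Γ ⊢ p : φ` are folded into one inductive `Judg`. -/
inductive Annot : Type
  | ty
  | pr
  | tm (A : Tm)
  | pf (φ : Tm)

/-- The typing judgments of λ_ert. -/
inductive Judg : Ctx → Tm → Annot → Prop
  -- Type well-formedness (figure: λ_ert Type Well-formedness)
  | unit_wf : Judg Γ .unit .ty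
  | nat_wf : Judg Γ .nat .ty
  | pi_wf : Judg Γ A .ty → Judg (.tm .comp A :: Γ) B .ty → Judg Γ (.pi A B) .ty
  | sigma_wf : Judg Γ A .ty → Judg (.tm .comp A :: Γ) B .ty → Judg Γ (.sigma A B) .ty
  | coprod_wf : Judg Γ A .ty → Judg Γ B .ty → Judg Γ (.coprod A B) .ty
  | set_wf : Judg Γ A .ty → Judg (.tm .comp A :: Γ) φ .pr → Judg Γ (.set A φ) .ty
  | pre_wf : Judg Γ φ .pr → Judg (.pf φ :: Γ) A .ty → Judg Γ (.pre φ A) .ty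
  | inter_wf : Judg Γ A .ty → Judg (.tm .comp A :: Γ) B .ty → Judg Γ (.inter A B) .ty
  | union_wf : Judg Γ A .ty → Judg (.tm .comp A :: Γ) B .ty → Judg Γ (.union A B) .ty
  -- Proposition well-formedness (figure: λ_ert Proposition Well-formedness)
  | top_wf : Judg Γ .top .pr
  | bot_wf : Judg Γ .bot .pr
  | dimp_wf : Judg Γ φ .pr → Judg (.pf φ :: Γ) ψ .pr → Judg Γ (.dimp φ ψ) .pr
  | dand_wf : Judg Γ φ .pr → Judg (.pf φ :: Γ) ψ .pr → Judg Γ (.dand φ ψ) .pr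
  | or_wf : Judg Γ φ .pr → Judg Γ ψ .pr → Judg Γ (.or φ ψ) .pr
  | all_wf : Judg Γ A .ty → Judg (.tm .comp A :: Γ) φ .pr → Judg Γ (.all A φ) .pr
  | ex_wf : Judg Γ A .ty → Judg (.tm .comp A :: Γ) φ .pr → Judg Γ (.ex A φ) .pr
  | eq_wf : Judg Γ A .ty → Judg (upg Γ) a (.tm A) → Judg (upg Γ) b (.tm A) →
      Judg Γ (.eq A a b) .pr
  -- Term typing (figure: λ_ert Term Typing)
  | var : HasVar Γ n (.tm .comp A) → Judg Γ (.var n) (.tm A)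
  | nil_intro : Judg Γ .nil (.tm .unit)
  | zero : Judg Γ .zero (.tm .nat)
  | succ : Judg Γ .succ (.tm (.pi .nat .nat))
  | abort : Judg Γ p (.pf .bot) → Judg Γ (.abort p) (.tm A)
  | lam : Judg (.tm .comp A :: Γ) e (.tm B) → Judg Γ (.lam A e) (.tm (.pi A B))
  | app : Judg Γ f (.tm (.pi A B)) → Judg Γ a (.tm A) →
      Judg Γ (.app f a) (.tm (B.subst0 a))
  | pair : Judg Γ l (.tm A) → Judg Γ r (.tm (B.subst0 l)) →
      Judg Γ (.pair l r) (.tm (.sigma A B))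
  | letPair : Judg Γ e (.tm (.sigma A B)) →
      Judg (.tm .comp (.sigma A B) :: Γ) C .ty →
      Judg (.tm .comp B :: .tm .comp A :: Γ) e'
        (.tm (C.substK (.pair (.var 1) (.var 0)) 2)) →
      Judg Γ (.letPair C e e') (.tm (C.subst0 e))
  | inl : Judg Γ e (.tm A) → Judg Γ (.inl e) (.tm (.coprod A B))
  | inr : Judg Γ e (.tm B) → Judg Γ (.inr e) (.tm (.coprod A B))
  | cases : Judg (.tm .comp (.coprod A B) :: Γ) C .ty →
      Judg Γ e (.tm (.coprod A B)) →
      Judg (.tm .comp A :: Γ) l (.tm (C.substK (.inl (.var 0)) 1)) →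
      Judg (.tm .comp B :: Γ) r (.tm (C.substK (.inr (.var 0)) 1)) →
      Judg Γ (.cases C e l r) (.tm (C.subst0 e))
  | lamPr : Judg (.pf φ :: Γ) e (.tm A) → Judg Γ (.lamPr φ e) (.tm (.pre φ A))
  | appPr : Judg Γ f (.tm (.pre φ A)) → Judg Γ p (.pf φ) →
      Judg Γ (.appPr f p) (.tm (A.subst0 p))
  | elem : Judg Γ a (.tm A) → Judg Γ p (.pf (φ.subst0 a)) →
      Judg Γ (.elem a p) (.tm (.set A φ))
  | letSet : Judg Γ e (.tm (.set A φ)) →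
      Judg (.tm .comp (.set A φ) :: Γ) C .ty →
      Judg (.pf φ :: .tm .comp A :: Γ) e'
        (.tm (C.substK (.elem (.var 1) (.var 0)) 2)) →
      Judg Γ (.letSet C e e') (.tm (C.subst0 e))
  | lamIr : Judg (.tm .ghost A :: Γ) e (.tm B) → Judg Γ (.lamIr A e) (.tm (.inter A B))
  | appIr : Judg Γ f (.tm (.inter A B)) → Judg (upg Γ) a (.tm A) →
      Judg Γ (.appIr f a) (.tm (B.subst0 a))
  | repr : Judg (upg Γ) a (.tm A) → Judg Γ b (.tm (B.subst0 a)) →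
      Judg Γ (.repr a b) (.tm (.union A B))
  | letRepr : Judg Γ e (.tm (.union A B)) →
      Judg (.tm .comp (.union A B) :: Γ) C .ty →
      Judg (.tm .comp B :: .tm .ghost A :: Γ) e'
        (.tm (C.substK (.repr (.var 1) (.var 0)) 2)) →
      Judg Γ (.letRepr C e e') (.tm (C.subst0 e))
  | natrec : Judg (.tm .comp .nat :: Γ) C .ty →
      Judg Γ e (.tm .nat) →
      Judg Γ z (.tm (C.subst0 .zero)) →
      Judg (.tm .comp C :: .tm .ghost .nat :: Γ) s
        (.tm (C.substK (.app .succ (.var 1)) 2)) →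
      Judg Γ (.natrec C e z s) (.tm (C.subst0 e))
  -- Proof typing (figure: λ_ert Proof Typing)
  | pvar : HasVar Γ n (.pf φ) → Judg Γ (.var n) (.pf φ)
  | triv : Judg Γ .triv (.pf .top)
  | pabort : Judg Γ p (.pf .bot) → Judg Γ (.pabort p) (.pf φ)
  | plam : Judg (.pf φ :: Γ) p (.pf ψ) → Judg Γ (.plam φ p) (.pf (.dimp φ ψ))
  | pmp : Judg Γ p (.pf (.dimp φ ψ)) → Judg Γ q (.pf φ) →
      Judg Γ (.pmp p q) (.pf (ψ.subst0 q))
  | pconj : Judg Γ p (.pf φ) → Judg Γ q (.pf (ψ.subst0 p)) →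
      Judg Γ (.pconj p q) (.pf (.dand φ ψ))
  | pletConj : Judg Γ p (.pf (.dand φ ψ)) →
      Judg (.pf (.dand φ ψ) :: Γ) θ .pr →
      Judg (.pf ψ :: .pf φ :: Γ) q (.pf (θ.substK (.pconj (.var 1) (.var 0)) 2)) →
      Judg Γ (.pletConj θ p q) (.pf (θ.subst0 p))
  | porl : Judg Γ p (.pf φ) → Judg Γ (.porl p) (.pf (.or φ ψ))
  | porr : Judg Γ p (.pf ψ) → Judg Γ (.porr p) (.pf (.or φ ψ))
  | pcasesOr : Judg (.pf (.or φ ψ) :: Γ) θ .pr →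
      Judg Γ p (.pf (.or φ ψ)) →
      Judg (.pf φ :: Γ) l (.pf (θ.substK (.porl (.var 0)) 1)) →
      Judg (.pf ψ :: Γ) r (.pf (θ.substK (.porr (.var 0)) 1)) →
      Judg Γ (.pcasesOr θ p l r) (.pf (θ.subst0 p))
  | pgen : Judg (.tm .ghost A :: Γ) p (.pf φ) → Judg Γ (.pgen A p) (.pf (.all A φ))
  | pspec : Judg Γ p (.pf (.all A φ)) → Judg (upg Γ) a (.tm A) →
      Judg Γ (.pspec p a) (.pf (φ.subst0 a))
  | pwit : Judg (upg Γ) a (.tm A) → Judg Γ p (.pf (φ.subst0 a)) →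
      Judg Γ (.pwit a p) (.pf (.ex A φ))
  | pletWit : Judg Γ p (.pf (.ex A φ)) →
      Judg (.pf (.ex A φ) :: Γ) ψ .pr →
      Judg (.pf φ :: .tm .comp A :: Γ) q (.pf (ψ.substK (.pwit (.var 1) (.var 0)) 2)) →
      Judg Γ (.pletWit ψ p q) (.pf (ψ.subst0 p))
  | pletPair : Judg (upg Γ) e (.tm (.sigma A B)) →
      Judg (.tm .comp (.sigma A B) :: Γ) φ .pr →
      Judg (.tm .comp B :: .tm .comp A :: Γ) q
        (.pf (φ.substK (.pair (.var 1) (.var 0)) 2)) →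
      Judg Γ (.pletPair φ e q) (.pf (φ.subst0 e))
  | pletSet : Judg (upg Γ) e (.tm (.set A φ)) →
      Judg (.tm .comp (.set A φ) :: Γ) ψ .pr →
      Judg (.pf φ :: .tm .comp A :: Γ) q
        (.pf (ψ.substK (.elem (.var 1) (.var 0)) 2)) →
      Judg Γ (.pletSet ψ e q) (.pf (ψ.subst0 e))
  | pletRepr : Judg (upg Γ) e (.tm (.union A B)) →
      Judg (.tm .comp (.union A B) :: Γ) ψ .pr →
      Judg (.tm .comp B :: .tm .comp A :: Γ) q
        (.pf (ψ.substK (.repr (.var 1) (.var 0)) 2)) →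
      Judg Γ (.pletRepr ψ e q) (.pf (ψ.subst0 e))
  | psubst : Judg (upg Γ) a (.tm A) → Judg (upg Γ) b (.tm A) →
      Judg Γ p (.pf (.eq A a b)) → Judg Γ q (.pf (φ.subst0 a)) →
      Judg Γ (.psubst φ a b p q) (.pf (φ.subst0 b))
  | pcases : Judg (.tm .comp (.coprod A B) :: Γ) φ .pr →
      Judg Γ e (.tm (.coprod A B)) →
      Judg (.tm .comp A :: Γ) l (.pf (φ.substK (.inl (.var 0)) 1)) →
      Judg (.tm .comp B :: Γ) r (.pf (φ.substK (.inr (.var 0)) 1)) →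
      Judg Γ (.pcases φ e l r) (.pf (φ.subst0 e))
  | pind : Judg (.tm .comp .nat :: Γ) φ .pr →
      Judg (upg Γ) e (.tm .nat) →
      Judg Γ z (.pf (φ.subst0 .zero)) →
      Judg (.pf φ :: .tm .comp .nat :: Γ) s (.pf (φ.substK (.app .succ (.var 1)) 2)) →
      Judg Γ (.pind φ e z s) (.pf (φ.subst0 e))
  -- Axioms (figure: λ_ert Axiom Typing)
  | prfl : Judg (upg Γ) a (.tm A) → Judg Γ (.prfl a) (.pf (.eq A a a))
  | puniq : Judg (upg Γ) a (.tm .unit) → Judg Γ (.puniq a) (.pf (.eq .unit a .nil))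
  | pdiscr : Judg (upg Γ) a (.tm A) → Judg (upg Γ) b (.tm B) →
      Judg Γ p (.pf (.eq (.coprod A B) (.inl a) (.inr b))) →
      Judg Γ (.pdiscr a b p) (.pf .bot)
  | pbetaPr : Judg (.pf φ :: upg Γ) e (.tm A) → Judg Γ p (.pf φ) →
      Judg Γ (.pbetaPr e p)
        (.pf (.eq (A.subst0 p) (.appPr (.lamPr φ e) p) (e.subst0 p)))
  | pbetaTy : Judg (.tm .comp A :: upg Γ) e (.tm B) → Judg (upg Γ) a (.tm A) →
      Judg Γ (.pbetaTy e a)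
        (.pf (.eq (B.subst0 a) (.app (.lam A e) a) (e.subst0 a)))
  | pbetaIr : Judg (.tm .comp A :: upg Γ) e (.tm B) → Judg (upg Γ) a (.tm A) →
      Judg Γ (.pbetaIr e a)
        (.pf (.eq (B.subst0 a) (.appIr (.lamIr A e) a) (e.subst0 a)))
  | pbetaLeft : Judg (upg Γ) a (.tm A) →
      Judg (.tm .comp A :: upg Γ) l (.tm (C.substK (.inl (.var 0)) 1)) →
      Judg (.tm .comp B :: upg Γ) r (.tm (C.substK (.inr (.var 0)) 1)) →
      Judg Γ (.pbetaLeft C l r a)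
        (.pf (.eq (C.subst0 (.inl a)) (.cases C (.inl a) l r) (l.subst0 a)))
  | pbetaRight : Judg (upg Γ) b (.tm B) →
      Judg (.tm .comp A :: upg Γ) l (.tm (C.substK (.inl (.var 0)) 1)) →
      Judg (.tm .comp B :: upg Γ) r (.tm (C.substK (.inr (.var 0)) 1)) →
      Judg Γ (.pbetaRight C l r b)
        (.pf (.eq (C.subst0 (.inr b)) (.cases C (.inr b) l r) (r.subst0 b)))
  | pbetaZero : Judg (upg Γ) z (.tm (C.subst0 .zero)) →
      Judg (.tm .comp C :: .tm .comp .nat :: upg Γ) s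
        (.tm (C.substK (.app .succ (.var 1)) 2)) →
      Judg Γ (.pbetaZero C z s)
        (.pf (.eq (C.subst0 .zero) (.natrec C .zero z s) z))
  | pbetaSucc : Judg (upg Γ) e (.tm .nat) →
      Judg (upg Γ) z (.tm (C.subst0 .zero)) →
      Judg (.tm .comp C :: .tm .comp .nat :: upg Γ) s
        (.tm (C.substK (.app .succ (.var 1)) 2)) →
      Judg Γ (.pbetaSucc C e z s)
        (.pf (.eq (C.subst0 (.app .succ e)) (.natrec C (.app .succ e) z s)
          (s.subst2 e (.natrec C e z s))))
  | pbetaPair : Judg (upg Γ) a (.tm A) → Judg (upg Γ) b (.tm (B.subst0 a)) →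
      Judg (.tm .comp B :: .tm .comp A :: upg Γ) e
        (.tm (C.substK (.pair (.var 1) (.var 0)) 2)) →
      Judg Γ (.pbetaPair a b e)
        (.pf (.eq (C.subst0 (.pair a b)) (.letPair C (.pair a b) e) (e.subst2 a b)))
  | pbetaSet : Judg (upg Γ) a (.tm A) → Judg (upg Γ) p (.pf (φ.subst0 a)) →
      Judg (.pf φ :: .tm .comp A :: upg Γ) e
        (.tm (C.substK (.elem (.var 1) (.var 0)) 2)) →
      Judg Γ (.pbetaSet a p e)
        (.pf (.eq (C.subst0 (.elem a p)) (.letSet C (.elem a p) e) (e.subst2 a p)))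
  | pbetaRepr : Judg (upg Γ) a (.tm A) → Judg (upg Γ) b (.tm (B.subst0 a)) →
      Judg (.tm .comp B :: .tm .comp A :: upg Γ) e
        (.tm (C.substK (.repr (.var 1) (.var 0)) 2)) →
      Judg Γ (.pbetaRepr a b e)
        (.pf (.eq (C.subst0 (.repr a b)) (.letRepr C (.repr a b) e) (e.subst2 a b)))
  | petaTy : Judg (upg Γ) f (.tm (.pi A B)) →
      Judg Γ (.petaTy f) (.pf (.eq (.pi A B) (.lam A (.app f.wk0 (.var 0))) f))
  | pirPr : Judg Γ A .ty → Judg (.pf φ :: upg Γ) e (.tm A.wk0) →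
      Judg (upg Γ) p (.pf φ) → Judg (upg Γ) q (.pf φ) →
      Judg Γ (.pirPr e p q) (.pf (.eq A (e.subst0 p) (e.subst0 q)))
  | pirTy : Judg Γ B .ty → Judg (upg Γ) e (.tm (.inter A B.wk0)) →
      Judg (upg Γ) a (.tm A) → Judg (upg Γ) b (.tm A) →
      Judg Γ (.pirTy e a b) (.pf (.eq B (.appIr e a) (.appIr e b)))
  | petaIr : Judg (upg Γ) f (.tm (.inter A B)) → Judg (upg Γ) g (.tm (.inter A B)) →
      Judg (upg Γ) i (.tm A) →
      Judg (.tm .comp A :: Γ) p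
        (.pf (.eq B (.appIr f.wk0 (.var 0)) (.appIr g.wk0 (.var 0)))) →
      Judg Γ (.petaIr f g i p) (.pf (.eq (.inter A B) f g))
  | petaPr : Judg (upg Γ) f (.tm (.pre φ B)) → Judg (upg Γ) g (.tm (.pre φ B)) →
      Judg (upg Γ) i (.pf φ) →
      Judg (.pf φ :: Γ) p
        (.pf (.eq B (.appPr f.wk0 (.var 0)) (.appPr g.wk0 (.var 0)))) →
      Judg Γ (.petaPr f g i p) (.pf (.eq (.pre φ B) f g))

/-- `Γ ⊢ A ty`: `A` is a well-formed type in `Γ`. -/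
abbrev IsTy (Γ : Ctx) (A : Tm) : Prop := Judg Γ A .ty
/-- `Γ ⊢ φ pr`: `φ` is a well-formed proposition in `Γ`. -/
abbrev IsPr (Γ : Ctx) (φ : Tm) : Prop := Judg Γ φ .pr
/-- `Γ ⊢ a : A`: term typing. -/
abbrev HasTy (Γ : Ctx) (a A : Tm) : Prop := Judg Γ a (.tm A)
/-- `Γ ⊢ p : φ`: proof typing. -/
abbrev HasPf (Γ : Ctx) (p φ : Tm) : Prop := Judg Γ p (.pf φ)

/-- `Γ ok`: context well-formedness. -/
inductive IsCtx : Ctx → Prop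
  | nil : IsCtx []
  | cons_tm {Γ : Ctx} {k : HypKind} {A : Tm} : IsCtx Γ → IsTy Γ A → IsCtx (.tm k A :: Γ)
  | cons_pf {Γ : Ctx} {φ : Tm} : IsCtx Γ → IsPr Γ φ → IsCtx (.pf φ :: Γ)

/-- The upgrade relation `Γ ⊑ Δ`: `Δ` is obtained from `Γ` by replacing some ghost
hypotheses by computational hypotheses with the same type. -/
inductive Upgrades : Ctx → Ctx → Prop
  | nil : Upgrades [] []
  | cons {Γ Δ : Ctx} (H : Hyp) : Upgrades Γ Δ → Upgrades (H :: Γ) (H :: Δ)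
  | upgrade {Γ Δ : Ctx} {A : Tm} : Upgrades Γ Δ →
      Upgrades (.tm .ghost A :: Γ) (.tm .comp A :: Δ)

/-- `Γ ⊢' σ : Δ`: well-formed substitution from `Γ` to `Δ`. -/
def SubstWf (σ : ℕ → Tm) (Γ Δ : Ctx) : Prop :=
  (∀ n A, HasVar Γ n (.tm .comp A) → HasTy Δ (σ n) (A.subst σ)) ∧
  (∀ n φ, HasVar Γ n (.pf φ) → HasPf Δ (σ n) (φ.subst σ)) ∧
  (∀ n A, HasVar Γ n (.tm .ghost A) →
    (∃ m, σ n = .var m ∧ HasVar Δ m (.tm .ghost (A.subst σ))) ∨ HasTy Δ (σ n) (A.subst σ))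

/-- `Γ ⊢ σ : Δ`: strict well-formed substitution (ghost variables are only
replaced with ghost variables). -/
def SubstStrict (σ : ℕ → Tm) (Γ Δ : Ctx) : Prop :=
  (∀ n A, HasVar Γ n (.tm .comp A) → HasTy Δ (σ n) (A.subst σ)) ∧
  (∀ n φ, HasVar Γ n (.pf φ) → HasPf Δ (σ n) (φ.subst σ)) ∧
  (∀ n A, HasVar Γ n (.tm .ghost A) → ∃ m, σ n = .var m ∧ HasVar Δ m (.tm .ghost (A.subst σ)))

end Ert

namespace Ert
namespace Tm

def rv (ρ : ℕ → ℕ) : ℕ → ℕ → Tm := fun d n => if n < d then .var n else .var (ρ (n - d) + d)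
def sv (σ : ℕ → Tm) : ℕ → ℕ → Tm := fun d n => if n < d then .var n else (σ (n - d)).rename (· + d)

theorem rename_def (t : Tm) (ρ : ℕ → ℕ) : rename t ρ = tmap (rv ρ) 0 t := rfl
theorem subst_def (t : Tm) (σ : ℕ → Tm) : subst t σ = tmap (sv σ) 0 t := rfl

theorem tmap_ext {v w : ℕ → ℕ → Tm} (h : ∀ d n, v d n = w d n) (t : Tm) (d : ℕ) :
    tmap v d t = tmap w d t := by
  have : v = w := funext fun d => funext (h d)
  rw [this]

theorem tmap_id' {v : ℕ → ℕ → Tm} (h : ∀ d n, v d n = .var n) (t : Tm) :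
    ∀ d, tmap v d t = t := by
  induction t <;> intro d <;> simp [tmap, h, *]

theorem tmap_comp {v w u : ℕ → ℕ → Tm} (k : ℕ) (h : ∀ d n, tmap w (k + d) (v d n) = u d n)
    (t : Tm) : ∀ d, tmap w (k + d) (tmap v d t) = tmap u d t := by
  induction t <;> intro d <;> simp [tmap, h, *, Nat.add_assoc]

theorem tmap_var (v : ℕ → ℕ → Tm) (d n : ℕ) : tmap v d (.var n) = v d n := rfl

theorem rename_var (n : ℕ) (ρ : ℕ → ℕ) : (Tm.var n).rename ρ = .var (ρ n) := by
  simp [rename_def, tmap, rv]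

theorem rename_congr {ρ₁ ρ₂ : ℕ → ℕ} (t : Tm) (h : ∀ n, ρ₁ n = ρ₂ n) :
    t.rename ρ₁ = t.rename ρ₂ := by
  have : ρ₁ = ρ₂ := funext h
  rw [this]

theorem subst_congr {σ₁ σ₂ : ℕ → Tm} (t : Tm) (h : ∀ n, σ₁ n = σ₂ n) :
    t.subst σ₁ = t.subst σ₂ := by
  have : σ₁ = σ₂ := funext h
  rw [this]

theorem rename_add_zero (t : Tm) : t.rename (· + 0) = t := by
  rw [rename_def]
  apply tmap_id'
  intro d n
  simp only [rv]
  split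
  · rfl
  · congr 1; omega

theorem rename_rename (t : Tm) (ρ₁ ρ₂ : ℕ → ℕ) :
    (t.rename ρ₁).rename ρ₂ = t.rename (fun n => ρ₂ (ρ₁ n)) := by
  rw [rename_def t, rename_def, rename_def]
  have := tmap_comp (v := rv ρ₁) (w := rv ρ₂) (u := rv (fun n => ρ₂ (ρ₁ n))) 0 ?_ t 0
  · simpa using this
  · intro d n
    simp only [rv]
    split
    · rw [tmap_var]; simp only [rv, Nat.zero_add]; split <;> first | rfl | omega
    · rw [tmap_var]; simp only [rv, Nat.zero_add]
      split
      · omega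
      · have e : ρ₁ (n - d) + d - d = ρ₁ (n - d) := by omega
        rw [e]

theorem rename_tmap_shift (ρ : ℕ → ℕ) (k : ℕ) (u : Tm) :
    tmap (rv ρ) k (u.rename (· + k)) = (u.rename ρ).rename (· + k) := by
  rw [rename_def u]
  rw [rename_rename]
  rw [rename_def]
  have := tmap_comp (v := rv (· + k)) (w := rv ρ) (u := rv (fun n => ρ n + k)) k ?_ u 0
  · simpa using this
  · intro d n
    simp only [rv]
    split
    · rw [tmap_var]; simp only [rv]; split <;> first | rfl | omega
    · rw [tmap_var]; simp only [rv]
      split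
      · omega
      · have e : n - d + k + d - (k + d) = n - d := by omega
        rw [e]; congr 1; omega

theorem subst_tmap_shift (τ : ℕ → Tm) (k : ℕ) (u : Tm) :
    tmap (sv τ) k (u.rename (· + k)) = (u.subst τ).rename (· + k) := by
  have hA : ∀ d n, tmap (sv τ) (k + d) (rv (· + k) d n) =
      (fun d n => if n < d then Tm.var n else (τ (n - d)).rename (· + (k + d))) d n := by
    intro d n
    simp only [rv]
    split
    · rw [tmap_var]; simp only [sv]; split <;> first | rfl | omega
    · rw [tmap_var]; simp only [sv]
      split
      · omega
      · have e : n - d + k + d - (k + d) = n - d := by omega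
        rw [e]
  have hB : ∀ d n, tmap (rv (· + k)) (0 + d) (sv τ d n) =
      (fun d n => if n < d then Tm.var n else (τ (n - d)).rename (· + (k + d))) d n := by
    intro d n
    simp only [sv]
    split
    · rw [tmap_var]; simp only [rv, Nat.zero_add]; split <;> first | rfl | omega
    · rw [Nat.zero_add, rename_tmap_shift, rename_rename]
      apply rename_congr; intro m; omega
  have h1 := tmap_comp k hA u 0
  have h2 := tmap_comp 0 hB u 0
  rw [rename_def u, subst_def, rename_def]
  simp only [Nat.add_zero, Nat.zero_add] at h1 h2
  rw [h1, h2]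

theorem subst_rename (t : Tm) (σ : ℕ → Tm) (ρ : ℕ → ℕ) :
    (t.subst σ).rename ρ = t.subst (fun n => (σ n).rename ρ) := by
  rw [subst_def t, rename_def, subst_def]
  have := tmap_comp (v := sv σ) (w := rv ρ) (u := sv (fun n => (σ n).rename ρ)) 0 ?_ t 0
  · simpa using this
  · intro d n
    simp only [sv]
    split
    · rw [tmap_var]; simp only [rv, Nat.zero_add]; split <;> first | rfl | omega
    · rw [Nat.zero_add, rename_tmap_shift]

theorem rename_subst (t : Tm) (ρ : ℕ → ℕ) (σ : ℕ → Tm) :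
    (t.rename ρ).subst σ = t.subst (fun n => σ (ρ n)) := by
  rw [rename_def t, subst_def, subst_def]
  have := tmap_comp (v := rv ρ) (w := sv σ) (u := sv (fun n => σ (ρ n))) 0 ?_ t 0
  · simpa using this
  · intro d n
    simp only [rv]
    split
    · rw [tmap_var]; simp only [sv, Nat.zero_add]; split <;> first | rfl | omega
    · rw [tmap_var]; simp only [sv, Nat.zero_add]
      split
      · omega
      · congr 2; omega

theorem subst_subst (t : Tm) (σ τ : ℕ → Tm) :
    (t.subst σ).subst τ = t.subst (fun n => (σ n).subst τ) := by
  rw [subst_def t, subst_def, subst_def]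
  have := tmap_comp (v := sv σ) (w := sv τ) (u := sv (fun n => (σ n).subst τ)) 0 ?_ t 0
  · simpa using this
  · intro d n
    simp only [sv]
    split
    · rw [tmap_var]; simp only [sv, Nat.zero_add]; split <;> first | rfl | omega
    · rw [Nat.zero_add, subst_tmap_shift]

theorem subst_id (t : Tm) : t.subst .var = t := by
  rw [subst_def]
  apply tmap_id'
  intro d n
  simp only [sv]
  split
  · rfl
  · rw [rename_var]; congr 1; omega

theorem subst_of_ren (t : Tm) (ρ : ℕ → ℕ) : t.subst (fun n => .var (ρ n)) = t.rename ρ := by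
  rw [subst_def, rename_def]
  apply tmap_ext
  intro d n
  simp only [sv, rv]
  split
  · rfl
  · rw [rename_var]

end Tm
def lift (σ : ℕ → Tm) : ℕ → Tm
  | 0 => .var 0
  | n+1 => (σ n).wk0

def liftN : ℕ → (ℕ → Tm) → (ℕ → Tm)
  | 0, σ => σ
  | k+1, σ => liftN k (lift σ)

namespace Tm

theorem wk0_def (t : Tm) : t.wk0 = t.rename Nat.succ := rfl
@[simp] theorem wk0_var (n : ℕ) : (Tm.var n).wk0 = .var (n+1) := rename_var n Nat.succ

@[simp] theorem subst_var' (n : ℕ) (σ : ℕ → Tm) : (Tm.var n).subst σ = σ n := by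
  rw [subst_def, tmap_var]; simp only [sv]
  rw [if_neg (by omega)]
  have e : n - 0 = n := rfl
  rw [e, rename_add_zero]

theorem subst_id' (t : Tm) (σ : ℕ → Tm) (h : ∀ n, σ n = .var n) : t.subst σ = t :=
  (subst_congr t h).trans (subst_id t)

theorem subst_ren' (t : Tm) (σ : ℕ → Tm) (ρ : ℕ → ℕ) (h : ∀ n, σ n = .var (ρ n)) :
    t.subst σ = t.rename ρ :=
  (subst_congr t h).trans (subst_of_ren t ρ)

theorem liftN_ge (k : ℕ) (σ : ℕ → Tm) (n : ℕ) : liftN k σ (n + k) = (σ n).rename (· + k) := by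
  induction k generalizing σ n with
  | zero => exact (rename_add_zero (σ n)).symm
  | succ k ih =>
    show liftN k (lift σ) (n + (k+1)) = _
    have e : n + (k+1) = (n+1) + k := by omega
    rw [e, ih]
    show ((σ n).wk0).rename _ = _
    rw [wk0_def, rename_rename]
    apply rename_congr; intro m; omega

theorem tmap_shift {v : ℕ → ℕ → Tm} (k : ℕ) (t : Tm) :
    ∀ d, tmap v (k + d) t = tmap (fun d' n => v (k + d') n) d t := by
  induction t <;> intro d <;> simp [tmap, *, Nat.add_assoc]

theorem tmap_sv_succ (σ : ℕ → Tm) (t : Tm) (d : ℕ) :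
    tmap (sv σ) (d + 1) t = tmap (sv (lift σ)) d t := by
  have e : d + 1 = 1 + d := by omega
  rw [e, tmap_shift]
  apply tmap_ext
  intro d' n
  simp only [sv]
  rcases Nat.lt_trichotomy n d' with h | h | h
  · rw [if_pos (by omega), if_pos (by omega)]
  · subst h
    rw [if_pos (by omega), if_neg (by omega)]
    have e2 : n - n = 0 := by omega
    rw [e2]
    show _ = ((Tm.var 0).rename _)
    rw [rename_var, Nat.zero_add]
  · rw [if_neg (by omega), if_neg (by omega)]
    obtain ⟨m, rfl⟩ : ∃ m, n = m + 1 + d' := ⟨n - 1 - d', by omega⟩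
    have e2 : m + 1 + d' - (1 + d') = m := by omega
    have e3 : m + 1 + d' - d' = m + 1 := by omega
    rw [e2, e3]
    show _ = ((σ m).wk0).rename _
    rw [wk0_def, rename_rename]
    apply rename_congr; intro i; omega

theorem tmap_sv_succ2 (σ : ℕ → Tm) (t : Tm) (d : ℕ) :
    tmap (sv σ) (d + 2) t = tmap (sv (lift (lift σ))) d t := by
  have e : d + 2 = (d + 1) + 1 := rfl
  rw [e, tmap_sv_succ, tmap_sv_succ]

theorem wk0_subst (t : Tm) (σ : ℕ → Tm) : t.wk0.subst σ = t.subst (fun n => σ (n+1)) := by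
  rw [wk0_def, rename_subst]

theorem subst_wk0 (t : Tm) (σ : ℕ → Tm) : (t.subst σ).wk0 = t.subst (fun n => (σ n).wk0) := by
  rw [wk0_def, subst_rename]
  exact subst_congr (σ₁ := fun n => (σ n).rename Nat.succ) (σ₂ := fun n => (σ n).wk0) t
    (fun n => rfl)

@[simp] theorem wk0_subst_lift (t : Tm) (σ : ℕ → Tm) :
    t.wk0.subst (lift σ) = (t.subst σ).wk0 := by
  rw [wk0_subst, subst_wk0]
  exact subst_congr t (fun n => rfl)

theorem subst0_subst (B a : Tm) (σ : ℕ → Tm) :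
    (B.subst0 a).subst σ = (B.subst (lift σ)).subst0 (a.subst σ) := by
  unfold subst0 substK
  rw [subst_subst, subst_subst]
  apply subst_congr
  intro n
  cases n with
  | zero => rw [show lift σ 0 = Tm.var 0 from rfl, subst_var']
  | succ n =>
    show (Tm.var (n + 0)).subst σ = ((σ n).wk0).subst _
    rw [subst_var', wk0_subst]
    exact (subst_id' (σ (n+0)) _ (fun m => rfl)).symm

theorem substK_subst (C v : Tm) (k : ℕ) (σ : ℕ → Tm) (hv : v.subst (liftN k σ) = v) :
    (C.substK v k).subst (liftN k σ) = (C.subst (lift σ)).substK v k := by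
  unfold substK
  rw [subst_subst, subst_subst]
  apply subst_congr
  intro n
  cases n with
  | zero => rw [show lift σ 0 = Tm.var 0 from rfl, subst_var', hv]
  | succ n =>
    show (Tm.var (n + k)).subst (liftN k σ) = ((σ n).wk0).subst _
    rw [subst_var', liftN_ge, wk0_subst]
    exact (subst_ren' (σ n) _ (· + k) (fun m => rfl)).symm

theorem subst2_subst (s a b : Tm) (σ : ℕ → Tm) :
    (s.subst2 a b).subst σ = (s.subst (lift (lift σ))).subst2 (a.subst σ) (b.subst σ) := by
  unfold subst2
  rw [subst_subst, subst_subst]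
  apply subst_congr
  intro n
  match n with
  | 0 => rw [show lift (lift σ) 0 = Tm.var 0 from rfl, subst_var']
  | 1 =>
    show (a.subst σ) = ((lift σ 0).wk0).subst _
    rw [show lift σ 0 = Tm.var 0 from rfl, wk0_var, subst_var']
  | (n+2) =>
    show (Tm.var n).subst σ = (((σ n).wk0).wk0).subst _
    rw [subst_var', wk0_subst, wk0_subst]
    exact (subst_id' (σ n) _ (fun m => rfl)).symm

end Tm
namespace Tm
@[simp] theorem sp_unit (σ : ℕ → Tm) :
    Tm.unit.subst σ = .unit := by
  rw [subst_def]; simp only [tmap, tmap_sv_succ, tmap_sv_succ2, ← subst_def]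

@[simp] theorem sp_nat (σ : ℕ → Tm) :
    Tm.nat.subst σ = .nat := by
  rw [subst_def]; simp only [tmap, tmap_sv_succ, tmap_sv_succ2, ← subst_def]

@[simp] theorem sp_pi (σ : ℕ → Tm) (A : Tm) (B : Tm):
    (Tm.pi A B).subst σ = .pi (A.subst σ) (B.subst (lift σ)) := by
  rw [subst_def]; simp only [tmap, tmap_sv_succ, tmap_sv_succ2, ← subst_def]

@[simp] theorem sp_sigma (σ : ℕ → Tm) (A : Tm) (B : Tm):
    (Tm.sigma A B).subst σ = .sigma (A.subst σ) (B.subst (lift σ)) := by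
  rw [subst_def]; simp only [tmap, tmap_sv_succ, tmap_sv_succ2, ← subst_def]

@[simp] theorem sp_coprod (σ : ℕ → Tm) (A : Tm) (B : Tm):
    (Tm.coprod A B).subst σ = .coprod (A.subst σ) (B.subst σ) := by
  rw [subst_def]; simp only [tmap, tmap_sv_succ, tmap_sv_succ2, ← subst_def]

@[simp] theorem sp_set (σ : ℕ → Tm) (A : Tm) (φ : Tm):
    (Tm.set A φ).subst σ = .set (A.subst σ) (φ.subst (lift σ)) := by
  rw [subst_def]; simp only [tmap, tmap_sv_succ, tmap_sv_succ2, ← subst_def]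

@[simp] theorem sp_pre (σ : ℕ → Tm) (φ : Tm) (A : Tm):
    (Tm.pre φ A).subst σ = .pre (φ.subst σ) (A.subst (lift σ)) := by
  rw [subst_def]; simp only [tmap, tmap_sv_succ, tmap_sv_succ2, ← subst_def]

@[simp] theorem sp_inter (σ : ℕ → Tm) (A : Tm) (B : Tm):
    (Tm.inter A B).subst σ = .inter (A.subst σ) (B.subst (lift σ)) := by
  rw [subst_def]; simp only [tmap, tmap_sv_succ, tmap_sv_succ2, ← subst_def]

@[simp] theorem sp_union (σ : ℕ → Tm) (A : Tm) (B : Tm):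
    (Tm.union A B).subst σ = .union (A.subst σ) (B.subst (lift σ)) := by
  rw [subst_def]; simp only [tmap, tmap_sv_succ, tmap_sv_succ2, ← subst_def]

@[simp] theorem sp_top (σ : ℕ → Tm) :
    Tm.top.subst σ = .top := by
  rw [subst_def]; simp only [tmap, tmap_sv_succ, tmap_sv_succ2, ← subst_def]

@[simp] theorem sp_bot (σ : ℕ → Tm) :
    Tm.bot.subst σ = .bot := by
  rw [subst_def]; simp only [tmap, tmap_sv_succ, tmap_sv_succ2, ← subst_def]

@[simp] theorem sp_dimp (σ : ℕ → Tm) (φ : Tm) (ψ : Tm):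
    (Tm.dimp φ ψ).subst σ = .dimp (φ.subst σ) (ψ.subst (lift σ)) := by
  rw [subst_def]; simp only [tmap, tmap_sv_succ, tmap_sv_succ2, ← subst_def]

@[simp] theorem sp_dand (σ : ℕ → Tm) (φ : Tm) (ψ : Tm):
    (Tm.dand φ ψ).subst σ = .dand (φ.subst σ) (ψ.subst (lift σ)) := by
  rw [subst_def]; simp only [tmap, tmap_sv_succ, tmap_sv_succ2, ← subst_def]

@[simp] theorem sp_or (σ : ℕ → Tm) (φ : Tm) (ψ : Tm):
    (Tm.or φ ψ).subst σ = .or (φ.subst σ) (ψ.subst σ) := by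
  rw [subst_def]; simp only [tmap, tmap_sv_succ, tmap_sv_succ2, ← subst_def]

@[simp] theorem sp_all (σ : ℕ → Tm) (A : Tm) (φ : Tm):
    (Tm.all A φ).subst σ = .all (A.subst σ) (φ.subst (lift σ)) := by
  rw [subst_def]; simp only [tmap, tmap_sv_succ, tmap_sv_succ2, ← subst_def]

@[simp] theorem sp_ex (σ : ℕ → Tm) (A : Tm) (φ : Tm):
    (Tm.ex A φ).subst σ = .ex (A.subst σ) (φ.subst (lift σ)) := by
  rw [subst_def]; simp only [tmap, tmap_sv_succ, tmap_sv_succ2, ← subst_def]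

@[simp] theorem sp_eq (σ : ℕ → Tm) (A : Tm) (a : Tm) (b : Tm):
    (Tm.eq A a b).subst σ = .eq (A.subst σ) (a.subst σ) (b.subst σ) := by
  rw [subst_def]; simp only [tmap, tmap_sv_succ, tmap_sv_succ2, ← subst_def]

@[simp] theorem sp_nil (σ : ℕ → Tm) :
    Tm.nil.subst σ = .nil := by
  rw [subst_def]; simp only [tmap, tmap_sv_succ, tmap_sv_succ2, ← subst_def]

@[simp] theorem sp_lam (σ : ℕ → Tm) (A : Tm) (e : Tm):
    (Tm.lam A e).subst σ = .lam (A.subst σ) (e.subst (lift σ)) := by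
  rw [subst_def]; simp only [tmap, tmap_sv_succ, tmap_sv_succ2, ← subst_def]

@[simp] theorem sp_app (σ : ℕ → Tm) (f : Tm) (a : Tm):
    (Tm.app f a).subst σ = .app (f.subst σ) (a.subst σ) := by
  rw [subst_def]; simp only [tmap, tmap_sv_succ, tmap_sv_succ2, ← subst_def]

@[simp] theorem sp_pair (σ : ℕ → Tm) (a : Tm) (b : Tm):
    (Tm.pair a b).subst σ = .pair (a.subst σ) (b.subst σ) := by
  rw [subst_def]; simp only [tmap, tmap_sv_succ, tmap_sv_succ2, ← subst_def]

@[simp] theorem sp_letPair (σ : ℕ → Tm) (C : Tm) (e : Tm) (e' : Tm):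
    (Tm.letPair C e e').subst σ = .letPair (C.subst (lift σ)) (e.subst σ) (e'.subst (lift (lift σ))) := by
  rw [subst_def]; simp only [tmap, tmap_sv_succ, tmap_sv_succ2, ← subst_def]

@[simp] theorem sp_inl (σ : ℕ → Tm) (a : Tm):
    (Tm.inl a).subst σ = .inl (a.subst σ) := by
  rw [subst_def]; simp only [tmap, tmap_sv_succ, tmap_sv_succ2, ← subst_def]

@[simp] theorem sp_inr (σ : ℕ → Tm) (a : Tm):
    (Tm.inr a).subst σ = .inr (a.subst σ) := by
  rw [subst_def]; simp only [tmap, tmap_sv_succ, tmap_sv_succ2, ← subst_def]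

@[simp] theorem sp_cases (σ : ℕ → Tm) (C : Tm) (e : Tm) (l : Tm) (r : Tm):
    (Tm.cases C e l r).subst σ = .cases (C.subst (lift σ)) (e.subst σ) (l.subst (lift σ)) (r.subst (lift σ)) := by
  rw [subst_def]; simp only [tmap, tmap_sv_succ, tmap_sv_succ2, ← subst_def]

@[simp] theorem sp_lamPr (σ : ℕ → Tm) (φ : Tm) (e : Tm):
    (Tm.lamPr φ e).subst σ = .lamPr (φ.subst σ) (e.subst (lift σ)) := by
  rw [subst_def]; simp only [tmap, tmap_sv_succ, tmap_sv_succ2, ← subst_def]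

@[simp] theorem sp_appPr (σ : ℕ → Tm) (f : Tm) (p : Tm):
    (Tm.appPr f p).subst σ = .appPr (f.subst σ) (p.subst σ) := by
  rw [subst_def]; simp only [tmap, tmap_sv_succ, tmap_sv_succ2, ← subst_def]

@[simp] theorem sp_elem (σ : ℕ → Tm) (a : Tm) (p : Tm):
    (Tm.elem a p).subst σ = .elem (a.subst σ) (p.subst σ) := by
  rw [subst_def]; simp only [tmap, tmap_sv_succ, tmap_sv_succ2, ← subst_def]

@[simp] theorem sp_letSet (σ : ℕ → Tm) (C : Tm) (e : Tm) (e' : Tm):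
    (Tm.letSet C e e').subst σ = .letSet (C.subst (lift σ)) (e.subst σ) (e'.subst (lift (lift σ))) := by
  rw [subst_def]; simp only [tmap, tmap_sv_succ, tmap_sv_succ2, ← subst_def]

@[simp] theorem sp_lamIr (σ : ℕ → Tm) (A : Tm) (e : Tm):
    (Tm.lamIr A e).subst σ = .lamIr (A.subst σ) (e.subst (lift σ)) := by
  rw [subst_def]; simp only [tmap, tmap_sv_succ, tmap_sv_succ2, ← subst_def]

@[simp] theorem sp_appIr (σ : ℕ → Tm) (f : Tm) (a : Tm):
    (Tm.appIr f a).subst σ = .appIr (f.subst σ) (a.subst σ) := by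
  rw [subst_def]; simp only [tmap, tmap_sv_succ, tmap_sv_succ2, ← subst_def]

@[simp] theorem sp_repr (σ : ℕ → Tm) (a : Tm) (b : Tm):
    (Tm.repr a b).subst σ = .repr (a.subst σ) (b.subst σ) := by
  rw [subst_def]; simp only [tmap, tmap_sv_succ, tmap_sv_succ2, ← subst_def]

@[simp] theorem sp_letRepr (σ : ℕ → Tm) (C : Tm) (e : Tm) (e' : Tm):
    (Tm.letRepr C e e').subst σ = .letRepr (C.subst (lift σ)) (e.subst σ) (e'.subst (lift (lift σ))) := by
  rw [subst_def]; simp only [tmap, tmap_sv_succ, tmap_sv_succ2, ← subst_def]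

@[simp] theorem sp_zero (σ : ℕ → Tm) :
    Tm.zero.subst σ = .zero := by
  rw [subst_def]; simp only [tmap, tmap_sv_succ, tmap_sv_succ2, ← subst_def]

@[simp] theorem sp_succ (σ : ℕ → Tm) :
    Tm.succ.subst σ = .succ := by
  rw [subst_def]; simp only [tmap, tmap_sv_succ, tmap_sv_succ2, ← subst_def]

@[simp] theorem sp_natrec (σ : ℕ → Tm) (C : Tm) (e : Tm) (z : Tm) (s : Tm):
    (Tm.natrec C e z s).subst σ = .natrec (C.subst (lift σ)) (e.subst σ) (z.subst σ) (s.subst (lift (lift σ))) := by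
  rw [subst_def]; simp only [tmap, tmap_sv_succ, tmap_sv_succ2, ← subst_def]

@[simp] theorem sp_abort (σ : ℕ → Tm) (p : Tm):
    (Tm.abort p).subst σ = .abort (p.subst σ) := by
  rw [subst_def]; simp only [tmap, tmap_sv_succ, tmap_sv_succ2, ← subst_def]

@[simp] theorem sp_triv (σ : ℕ → Tm) :
    Tm.triv.subst σ = .triv := by
  rw [subst_def]; simp only [tmap, tmap_sv_succ, tmap_sv_succ2, ← subst_def]

@[simp] theorem sp_pabort (σ : ℕ → Tm) (p : Tm):
    (Tm.pabort p).subst σ = .pabort (p.subst σ) := by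
  rw [subst_def]; simp only [tmap, tmap_sv_succ, tmap_sv_succ2, ← subst_def]

@[simp] theorem sp_plam (σ : ℕ → Tm) (φ : Tm) (p : Tm):
    (Tm.plam φ p).subst σ = .plam (φ.subst σ) (p.subst (lift σ)) := by
  rw [subst_def]; simp only [tmap, tmap_sv_succ, tmap_sv_succ2, ← subst_def]

@[simp] theorem sp_pmp (σ : ℕ → Tm) (p : Tm) (q : Tm):
    (Tm.pmp p q).subst σ = .pmp (p.subst σ) (q.subst σ) := by
  rw [subst_def]; simp only [tmap, tmap_sv_succ, tmap_sv_succ2, ← subst_def]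

@[simp] theorem sp_pconj (σ : ℕ → Tm) (p : Tm) (q : Tm):
    (Tm.pconj p q).subst σ = .pconj (p.subst σ) (q.subst σ) := by
  rw [subst_def]; simp only [tmap, tmap_sv_succ, tmap_sv_succ2, ← subst_def]

@[simp] theorem sp_pletConj (σ : ℕ → Tm) (θ : Tm) (p : Tm) (q : Tm):
    (Tm.pletConj θ p q).subst σ = .pletConj (θ.subst (lift σ)) (p.subst σ) (q.subst (lift (lift σ))) := by
  rw [subst_def]; simp only [tmap, tmap_sv_succ, tmap_sv_succ2, ← subst_def]

@[simp] theorem sp_porl (σ : ℕ → Tm) (p : Tm):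
    (Tm.porl p).subst σ = .porl (p.subst σ) := by
  rw [subst_def]; simp only [tmap, tmap_sv_succ, tmap_sv_succ2, ← subst_def]

@[simp] theorem sp_porr (σ : ℕ → Tm) (p : Tm):
    (Tm.porr p).subst σ = .porr (p.subst σ) := by
  rw [subst_def]; simp only [tmap, tmap_sv_succ, tmap_sv_succ2, ← subst_def]

@[simp] theorem sp_pcasesOr (σ : ℕ → Tm) (θ : Tm) (p : Tm) (l : Tm) (r : Tm):
    (Tm.pcasesOr θ p l r).subst σ = .pcasesOr (θ.subst (lift σ)) (p.subst σ) (l.subst (lift σ)) (r.subst (lift σ)) := by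
  rw [subst_def]; simp only [tmap, tmap_sv_succ, tmap_sv_succ2, ← subst_def]

@[simp] theorem sp_pgen (σ : ℕ → Tm) (A : Tm) (p : Tm):
    (Tm.pgen A p).subst σ = .pgen (A.subst σ) (p.subst (lift σ)) := by
  rw [subst_def]; simp only [tmap, tmap_sv_succ, tmap_sv_succ2, ← subst_def]

@[simp] theorem sp_pspec (σ : ℕ → Tm) (p : Tm) (a : Tm):
    (Tm.pspec p a).subst σ = .pspec (p.subst σ) (a.subst σ) := by
  rw [subst_def]; simp only [tmap, tmap_sv_succ, tmap_sv_succ2, ← subst_def]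

@[simp] theorem sp_pwit (σ : ℕ → Tm) (a : Tm) (p : Tm):
    (Tm.pwit a p).subst σ = .pwit (a.subst σ) (p.subst σ) := by
  rw [subst_def]; simp only [tmap, tmap_sv_succ, tmap_sv_succ2, ← subst_def]

@[simp] theorem sp_pletWit (σ : ℕ → Tm) (ψ : Tm) (p : Tm) (q : Tm):
    (Tm.pletWit ψ p q).subst σ = .pletWit (ψ.subst (lift σ)) (p.subst σ) (q.subst (lift (lift σ))) := by
  rw [subst_def]; simp only [tmap, tmap_sv_succ, tmap_sv_succ2, ← subst_def]

@[simp] theorem sp_pletPair (σ : ℕ → Tm) (φ : Tm) (e : Tm) (q : Tm):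
    (Tm.pletPair φ e q).subst σ = .pletPair (φ.subst (lift σ)) (e.subst σ) (q.subst (lift (lift σ))) := by
  rw [subst_def]; simp only [tmap, tmap_sv_succ, tmap_sv_succ2, ← subst_def]

@[simp] theorem sp_pletSet (σ : ℕ → Tm) (φ : Tm) (e : Tm) (q : Tm):
    (Tm.pletSet φ e q).subst σ = .pletSet (φ.subst (lift σ)) (e.subst σ) (q.subst (lift (lift σ))) := by
  rw [subst_def]; simp only [tmap, tmap_sv_succ, tmap_sv_succ2, ← subst_def]

@[simp] theorem sp_pletRepr (σ : ℕ → Tm) (φ : Tm) (e : Tm) (q : Tm):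
    (Tm.pletRepr φ e q).subst σ = .pletRepr (φ.subst (lift σ)) (e.subst σ) (q.subst (lift (lift σ))) := by
  rw [subst_def]; simp only [tmap, tmap_sv_succ, tmap_sv_succ2, ← subst_def]

@[simp] theorem sp_psubst (σ : ℕ → Tm) (φ : Tm) (a : Tm) (b : Tm) (p : Tm) (q : Tm):
    (Tm.psubst φ a b p q).subst σ = .psubst (φ.subst (lift σ)) (a.subst σ) (b.subst σ) (p.subst σ) (q.subst σ) := by
  rw [subst_def]; simp only [tmap, tmap_sv_succ, tmap_sv_succ2, ← subst_def]

@[simp] theorem sp_pcases (σ : ℕ → Tm) (φ : Tm) (e : Tm) (l : Tm) (r : Tm):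
    (Tm.pcases φ e l r).subst σ = .pcases (φ.subst (lift σ)) (e.subst σ) (l.subst (lift σ)) (r.subst (lift σ)) := by
  rw [subst_def]; simp only [tmap, tmap_sv_succ, tmap_sv_succ2, ← subst_def]

@[simp] theorem sp_pind (σ : ℕ → Tm) (φ : Tm) (e : Tm) (z : Tm) (s : Tm):
    (Tm.pind φ e z s).subst σ = .pind (φ.subst (lift σ)) (e.subst σ) (z.subst σ) (s.subst (lift (lift σ))) := by
  rw [subst_def]; simp only [tmap, tmap_sv_succ, tmap_sv_succ2, ← subst_def]

@[simp] theorem sp_prfl (σ : ℕ → Tm) (a : Tm):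
    (Tm.prfl a).subst σ = .prfl (a.subst σ) := by
  rw [subst_def]; simp only [tmap, tmap_sv_succ, tmap_sv_succ2, ← subst_def]

@[simp] theorem sp_puniq (σ : ℕ → Tm) (a : Tm):
    (Tm.puniq a).subst σ = .puniq (a.subst σ) := by
  rw [subst_def]; simp only [tmap, tmap_sv_succ, tmap_sv_succ2, ← subst_def]

@[simp] theorem sp_pdiscr (σ : ℕ → Tm) (a : Tm) (b : Tm) (p : Tm):
    (Tm.pdiscr a b p).subst σ = .pdiscr (a.subst σ) (b.subst σ) (p.subst σ) := by
  rw [subst_def]; simp only [tmap, tmap_sv_succ, tmap_sv_succ2, ← subst_def]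

@[simp] theorem sp_pbetaPr (σ : ℕ → Tm) (e : Tm) (p : Tm):
    (Tm.pbetaPr e p).subst σ = .pbetaPr (e.subst (lift σ)) (p.subst σ) := by
  rw [subst_def]; simp only [tmap, tmap_sv_succ, tmap_sv_succ2, ← subst_def]

@[simp] theorem sp_pbetaTy (σ : ℕ → Tm) (e : Tm) (a : Tm):
    (Tm.pbetaTy e a).subst σ = .pbetaTy (e.subst (lift σ)) (a.subst σ) := by
  rw [subst_def]; simp only [tmap, tmap_sv_succ, tmap_sv_succ2, ← subst_def]

@[simp] theorem sp_pbetaIr (σ : ℕ → Tm) (e : Tm) (a : Tm):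
    (Tm.pbetaIr e a).subst σ = .pbetaIr (e.subst (lift σ)) (a.subst σ) := by
  rw [subst_def]; simp only [tmap, tmap_sv_succ, tmap_sv_succ2, ← subst_def]

@[simp] theorem sp_pbetaLeft (σ : ℕ → Tm) (C : Tm) (l : Tm) (r : Tm) (a : Tm):
    (Tm.pbetaLeft C l r a).subst σ = .pbetaLeft (C.subst (lift σ)) (l.subst (lift σ)) (r.subst (lift σ)) (a.subst σ) := by
  rw [subst_def]; simp only [tmap, tmap_sv_succ, tmap_sv_succ2, ← subst_def]

@[simp] theorem sp_pbetaRight (σ : ℕ → Tm) (C : Tm) (l : Tm) (r : Tm) (b : Tm):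
    (Tm.pbetaRight C l r b).subst σ = .pbetaRight (C.subst (lift σ)) (l.subst (lift σ)) (r.subst (lift σ)) (b.subst σ) := by
  rw [subst_def]; simp only [tmap, tmap_sv_succ, tmap_sv_succ2, ← subst_def]

@[simp] theorem sp_pbetaZero (σ : ℕ → Tm) (C : Tm) (z : Tm) (s : Tm):
    (Tm.pbetaZero C z s).subst σ = .pbetaZero (C.subst (lift σ)) (z.subst σ) (s.subst (lift (lift σ))) := by
  rw [subst_def]; simp only [tmap, tmap_sv_succ, tmap_sv_succ2, ← subst_def]

@[simp] theorem sp_pbetaSucc (σ : ℕ → Tm) (C : Tm) (e : Tm) (z : Tm) (s : Tm):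
    (Tm.pbetaSucc C e z s).subst σ = .pbetaSucc (C.subst (lift σ)) (e.subst σ) (z.subst σ) (s.subst (lift (lift σ))) := by
  rw [subst_def]; simp only [tmap, tmap_sv_succ, tmap_sv_succ2, ← subst_def]

@[simp] theorem sp_pbetaPair (σ : ℕ → Tm) (a : Tm) (b : Tm) (e : Tm):
    (Tm.pbetaPair a b e).subst σ = .pbetaPair (a.subst σ) (b.subst σ) (e.subst (lift (lift σ))) := by
  rw [subst_def]; simp only [tmap, tmap_sv_succ, tmap_sv_succ2, ← subst_def]

@[simp] theorem sp_pbetaSet (σ : ℕ → Tm) (a : Tm) (p : Tm) (e : Tm):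
    (Tm.pbetaSet a p e).subst σ = .pbetaSet (a.subst σ) (p.subst σ) (e.subst (lift (lift σ))) := by
  rw [subst_def]; simp only [tmap, tmap_sv_succ, tmap_sv_succ2, ← subst_def]

@[simp] theorem sp_pbetaRepr (σ : ℕ → Tm) (a : Tm) (b : Tm) (e : Tm):
    (Tm.pbetaRepr a b e).subst σ = .pbetaRepr (a.subst σ) (b.subst σ) (e.subst (lift (lift σ))) := by
  rw [subst_def]; simp only [tmap, tmap_sv_succ, tmap_sv_succ2, ← subst_def]

@[simp] theorem sp_petaTy (σ : ℕ → Tm) (f : Tm):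
    (Tm.petaTy f).subst σ = .petaTy (f.subst σ) := by
  rw [subst_def]; simp only [tmap, tmap_sv_succ, tmap_sv_succ2, ← subst_def]

@[simp] theorem sp_pirPr (σ : ℕ → Tm) (e : Tm) (p : Tm) (q : Tm):
    (Tm.pirPr e p q).subst σ = .pirPr (e.subst (lift σ)) (p.subst σ) (q.subst σ) := by
  rw [subst_def]; simp only [tmap, tmap_sv_succ, tmap_sv_succ2, ← subst_def]

@[simp] theorem sp_pirTy (σ : ℕ → Tm) (e : Tm) (a : Tm) (b : Tm):
    (Tm.pirTy e a b).subst σ = .pirTy (e.subst σ) (a.subst σ) (b.subst σ) := by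
  rw [subst_def]; simp only [tmap, tmap_sv_succ, tmap_sv_succ2, ← subst_def]

@[simp] theorem sp_petaIr (σ : ℕ → Tm) (f : Tm) (g : Tm) (i : Tm) (p : Tm):
    (Tm.petaIr f g i p).subst σ = .petaIr (f.subst σ) (g.subst σ) (i.subst σ) (p.subst (lift σ)) := by
  rw [subst_def]; simp only [tmap, tmap_sv_succ, tmap_sv_succ2, ← subst_def]

@[simp] theorem sp_petaPr (σ : ℕ → Tm) (f : Tm) (g : Tm) (i : Tm) (p : Tm):
    (Tm.petaPr f g i p).subst σ = .petaPr (f.subst σ) (g.subst σ) (i.subst σ) (p.subst (lift σ)) := by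
  rw [subst_def]; simp only [tmap, tmap_sv_succ, tmap_sv_succ2, ← subst_def]
end Tm
namespace Tm

@[simp] theorem lift_zero (σ : ℕ → Tm) : lift σ 0 = .var 0 := rfl
@[simp] theorem lift_succ (σ : ℕ → Tm) (n : ℕ) : lift σ (n+1) = (σ n).wk0 := rfl
@[simp] theorem lift_lift_one (σ : ℕ → Tm) : lift (lift σ) 1 = .var 1 := by
  show (lift σ 0).wk0 = _
  rw [lift_zero, wk0_var]

attribute [simp] subst0_subst subst2_subst

@[simp] theorem spK_pair (C : Tm) (σ : ℕ → Tm) :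
    (C.substK (.pair (.var 1) (.var 0)) 2).subst (lift (lift σ))
    = (C.subst (lift σ)).substK (.pair (.var 1) (.var 0)) 2 :=
  substK_subst C _ 2 σ (by show (Tm.pair (.var 1) (.var 0)).subst (lift (lift σ)) = _; simp)

@[simp] theorem spK_elem (C : Tm) (σ : ℕ → Tm) :
    (C.substK (.elem (.var 1) (.var 0)) 2).subst (lift (lift σ))
    = (C.subst (lift σ)).substK (.elem (.var 1) (.var 0)) 2 :=
  substK_subst C _ 2 σ (by show (Tm.elem (.var 1) (.var 0)).subst (lift (lift σ)) = _; simp)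

@[simp] theorem spK_repr (C : Tm) (σ : ℕ → Tm) :
    (C.substK (.repr (.var 1) (.var 0)) 2).subst (lift (lift σ))
    = (C.subst (lift σ)).substK (.repr (.var 1) (.var 0)) 2 :=
  substK_subst C _ 2 σ (by show (Tm.repr (.var 1) (.var 0)).subst (lift (lift σ)) = _; simp)

@[simp] theorem spK_pconj (C : Tm) (σ : ℕ → Tm) :
    (C.substK (.pconj (.var 1) (.var 0)) 2).subst (lift (lift σ))
    = (C.subst (lift σ)).substK (.pconj (.var 1) (.var 0)) 2 :=
  substK_subst C _ 2 σ (by show (Tm.pconj (.var 1) (.var 0)).subst (lift (lift σ)) = _; simp)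

@[simp] theorem spK_pwit (C : Tm) (σ : ℕ → Tm) :
    (C.substK (.pwit (.var 1) (.var 0)) 2).subst (lift (lift σ))
    = (C.subst (lift σ)).substK (.pwit (.var 1) (.var 0)) 2 :=
  substK_subst C _ 2 σ (by show (Tm.pwit (.var 1) (.var 0)).subst (lift (lift σ)) = _; simp)

@[simp] theorem spK_succ (C : Tm) (σ : ℕ → Tm) :
    (C.substK (.app .succ (.var 1)) 2).subst (lift (lift σ))
    = (C.subst (lift σ)).substK (.app .succ (.var 1)) 2 :=
  substK_subst C _ 2 σ (by show (Tm.app .succ (.var 1)).subst (lift (lift σ)) = _; simp)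

@[simp] theorem spK_inl (C : Tm) (σ : ℕ → Tm) :
    (C.substK (.inl (.var 0)) 1).subst (lift σ)
    = (C.subst (lift σ)).substK (.inl (.var 0)) 1 :=
  substK_subst C _ 1 σ (by show (Tm.inl (.var 0)).subst (lift σ) = _; simp)

@[simp] theorem spK_inr (C : Tm) (σ : ℕ → Tm) :
    (C.substK (.inr (.var 0)) 1).subst (lift σ)
    = (C.subst (lift σ)).substK (.inr (.var 0)) 1 :=
  substK_subst C _ 1 σ (by show (Tm.inr (.var 0)).subst (lift σ) = _; simp)

@[simp] theorem spK_porl (C : Tm) (σ : ℕ → Tm) :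
    (C.substK (.porl (.var 0)) 1).subst (lift σ)
    = (C.subst (lift σ)).substK (.porl (.var 0)) 1 :=
  substK_subst C _ 1 σ (by show (Tm.porl (.var 0)).subst (lift σ) = _; simp)

@[simp] theorem spK_porr (C : Tm) (σ : ℕ → Tm) :
    (C.substK (.porr (.var 0)) 1).subst (lift σ)
    = (C.subst (lift σ)).substK (.porr (.var 0)) 1 :=
  substK_subst C _ 1 σ (by show (Tm.porr (.var 0)).subst (lift σ) = _; simp)

end Tm

/-- Substitution on annotations. -/
def asubst (a : Annot) (σ : ℕ → Tm) : Annot :=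
  match a with
  | .ty => .ty
  | .pr => .pr
  | .tm A => .tm (A.subst σ)
  | .pf φ => .pf (φ.subst σ)

@[simp] theorem asubst_ty (σ : ℕ → Tm) : asubst .ty σ = .ty := rfl
@[simp] theorem asubst_pr (σ : ℕ → Tm) : asubst .pr σ = .pr := rfl
@[simp] theorem asubst_tm (A : Tm) (σ : ℕ → Tm) : asubst (.tm A) σ = .tm (A.subst σ) := rfl
@[simp] theorem asubst_pf (φ : Tm) (σ : ℕ → Tm) : asubst (.pf φ) σ = .pf (φ.subst σ) := rfl

@[simp] theorem Hyp.wk_tm (k : HypKind) (A : Tm) : (Hyp.tm k A).wk = .tm k A.wk0 := rfl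
@[simp] theorem Hyp.wk_pf (φ : Tm) : (Hyp.pf φ).wk = .pf φ.wk0 := rfl

theorem hasVar_cons {H : Hyp} {Γ : Ctx} {n : ℕ} {H' : Hyp} (h : HasVar (H :: Γ) n H') :
    (n = 0 ∧ H' = H.wk) ∨ ∃ m H'', n = m + 1 ∧ H' = H''.wk ∧ HasVar Γ m H'' := by
  cases h with
  | head => exact .inl ⟨rfl, rfl⟩
  | tail h => exact .inr ⟨_, _, rfl, rfl, h⟩

@[simp] theorem upg_nil : upg [] = [] := rfl
@[simp] theorem upg_cons_tm (k : HypKind) (A : Tm) (Γ : Ctx) :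
    upg (.tm k A :: Γ) = .tm .comp A :: upg Γ := rfl
@[simp] theorem upg_cons_pf (φ : Tm) (Γ : Ctx) : upg (.pf φ :: Γ) = .pf φ :: upg Γ := rfl

theorem hasVar_upg_tm {Γ : Ctx} {n : ℕ} {k : HypKind} {A : Tm}
    (h : HasVar Γ n (.tm k A)) : HasVar (upg Γ) n (.tm .comp A) := by
  induction Γ generalizing n k A with
  | nil => cases h
  | cons H Γ ih =>
    rcases hasVar_cons h with ⟨rfl, e⟩ | ⟨m, H'', rfl, e, h'⟩
    · cases H with
      | tm k' A' =>
        rw [Hyp.wk_tm] at e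
        injection e with e1 e2
        subst e2
        exact HasVar.head (H := .tm .comp A') (Γ := upg Γ)
      | pf φ => rw [Hyp.wk_pf] at e; cases e
    · cases H'' with
      | tm k'' A'' =>
        rw [Hyp.wk_tm] at e
        injection e with e1 e2
        subst e1; subst e2
        cases H with
        | tm k' A' => exact HasVar.tail (ih h')
        | pf φ' => exact HasVar.tail (ih h')
      | pf φ'' => rw [Hyp.wk_pf] at e; cases e

theorem hasVar_upg_pf {Γ : Ctx} {n : ℕ} {φ : Tm}
    (h : HasVar Γ n (.pf φ)) : HasVar (upg Γ) n (.pf φ) := by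
  induction Γ generalizing n φ with
  | nil => cases h
  | cons H Γ ih =>
    rcases hasVar_cons h with ⟨rfl, e⟩ | ⟨m, H'', rfl, e, h'⟩
    · cases H with
      | tm k' A' => rw [Hyp.wk_tm] at e; cases e
      | pf φ' =>
        rw [Hyp.wk_pf] at e
        injection e with e1
        subst e1
        exact HasVar.head (H := .pf φ') (Γ := upg Γ)
    · cases H'' with
      | tm k'' A'' => rw [Hyp.wk_tm] at e; cases e
      | pf φ'' =>
        rw [Hyp.wk_pf] at e
        injection e with e1
        subst e1
        cases H with
        | tm k' A' => exact HasVar.tail (ih h')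
        | pf φ' => exact HasVar.tail (ih h')

theorem hasVar_of_upg_tm {Γ : Ctx} {n : ℕ} {A : Tm}
    (h : HasVar (upg Γ) n (.tm .comp A)) : ∃ k, HasVar Γ n (.tm k A) := by
  induction Γ generalizing n A with
  | nil => cases h
  | cons H Γ ih =>
    cases H with
    | tm k' A' =>
      rw [upg_cons_tm] at h
      rcases hasVar_cons h with ⟨rfl, e⟩ | ⟨m, H'', rfl, e, h'⟩
      · rw [Hyp.wk_tm] at e
        injection e with e1 e2
        subst e2
        exact ⟨k', HasVar.head (H := .tm k' A')⟩
      · cases H'' with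
        | tm k'' A'' =>
          rw [Hyp.wk_tm] at e
          injection e with e1 e2
          subst e1; subst e2
          obtain ⟨k, hk⟩ := ih h'
          exact ⟨k, HasVar.tail hk⟩
        | pf φ'' => rw [Hyp.wk_pf] at e; cases e
    | pf φ' =>
      rw [upg_cons_pf] at h
      rcases hasVar_cons h with ⟨rfl, e⟩ | ⟨m, H'', rfl, e, h'⟩
      · rw [Hyp.wk_pf] at e; cases e
      · cases H'' with
        | tm k'' A'' =>
          rw [Hyp.wk_tm] at e
          injection e with e1 e2
          subst e1; subst e2
          obtain ⟨k, hk⟩ := ih h'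
          exact ⟨k, HasVar.tail hk⟩
        | pf φ'' => rw [Hyp.wk_pf] at e; cases e

theorem hasVar_of_upg_ghost {Γ : Ctx} {n : ℕ} {A : Tm}
    (h : HasVar (upg Γ) n (.tm .ghost A)) : False := by
  induction Γ generalizing n A with
  | nil => cases h
  | cons H Γ ih =>
    cases H with
    | tm k' A' =>
      rw [upg_cons_tm] at h
      rcases hasVar_cons h with ⟨rfl, e⟩ | ⟨m, H'', rfl, e, h'⟩
      · rw [Hyp.wk_tm] at e; injection e with e1 e2; cases e1
      · cases H'' with
        | tm k'' A'' =>
          rw [Hyp.wk_tm] at e; injection e with e1 e2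
          subst e1
          exact ih h'
        | pf φ'' => rw [Hyp.wk_pf] at e; cases e
    | pf φ' =>
      rw [upg_cons_pf] at h
      rcases hasVar_cons h with ⟨rfl, e⟩ | ⟨m, H'', rfl, e, h'⟩
      · rw [Hyp.wk_pf] at e; cases e
      · cases H'' with
        | tm k'' A'' =>
          rw [Hyp.wk_tm] at e; injection e with e1 e2
          subst e1
          exact ih h'
        | pf φ'' => rw [Hyp.wk_pf] at e; cases e

theorem hasVar_of_upg_pf {Γ : Ctx} {n : ℕ} {φ : Tm}
    (h : HasVar (upg Γ) n (.pf φ)) : HasVar Γ n (.pf φ) := by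
  induction Γ generalizing n φ with
  | nil => cases h
  | cons H Γ ih =>
    cases H with
    | tm k' A' =>
      rw [upg_cons_tm] at h
      rcases hasVar_cons h with ⟨rfl, e⟩ | ⟨m, H'', rfl, e, h'⟩
      · rw [Hyp.wk_tm] at e; cases e
      · cases H'' with
        | tm k'' A'' => rw [Hyp.wk_tm] at e; cases e
        | pf φ'' =>
          rw [Hyp.wk_pf] at e; injection e with e1
          subst e1
          exact HasVar.tail (ih h')
    | pf φ' =>
      rw [upg_cons_pf] at h
      rcases hasVar_cons h with ⟨rfl, e⟩ | ⟨m, H'', rfl, e, h'⟩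
      · rw [Hyp.wk_pf] at e; injection e with e1; subst e1
        exact HasVar.head (H := .pf φ')
      · cases H'' with
        | tm k'' A'' => rw [Hyp.wk_tm] at e; cases e
        | pf φ'' =>
          rw [Hyp.wk_pf] at e; injection e with e1
          subst e1
          exact HasVar.tail (ih h')

/-- An abstract family of "good" substitution relations, closed under the operations
needed for the syntactic substitution lemma. -/
structure GoodFam (G : (ℕ → Tm) → Ctx → Ctx → Prop) : Prop where
  var_tm : ∀ {σ Γ Δ n A}, G σ Γ Δ → HasVar Γ n (.tm .comp A) → HasTy Δ (σ n) (A.subst σ)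
  var_pf : ∀ {σ Γ Δ n φ}, G σ Γ Δ → HasVar Γ n (.pf φ) → HasPf Δ (σ n) (φ.subst σ)
  lift_tm : ∀ {σ Γ Δ} (k : HypKind) (A : Tm), G σ Γ Δ →
      G (lift σ) (.tm k A :: Γ) (.tm k (A.subst σ) :: Δ)
  lift_pf : ∀ {σ Γ Δ} (φ : Tm), G σ Γ Δ →
      G (lift σ) (.pf φ :: Γ) (.pf (φ.subst σ) :: Δ)
  upg : ∀ {σ Γ Δ}, G σ Γ Δ → G σ (upg Γ) (upg Δ)
set_option maxHeartbeats 1600000 in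
/-- Main lemma: any "good" family of substitutions preserves all four judgments. -/
theorem subst_judg {G : (ℕ → Tm) → Ctx → Ctx → Prop} (hG : GoodFam G) :
    ∀ {Γ : Ctx} {t : Tm} {ann : Annot}, Judg Γ t ann →
      ∀ (σ : ℕ → Tm) (Δ : Ctx), G σ Γ Δ → Judg Δ (t.subst σ) (asubst ann σ) := by
  intro Γ t ann h
  induction h with
  | unit_wf => intro σ Δ g; simp; exact .unit_wf
  | nat_wf => intro σ Δ g; simp; exact .nat_wf
  | pi_wf _ _ ihA ihB =>
    intro σ Δ g
    have h1 := ihA σ Δ g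
    have h2 := ihB (lift σ) _ (hG.lift_tm .comp _ g)
    simp at h1 h2 ⊢
    exact .pi_wf h1 h2
  | sigma_wf _ _ ihA ihB =>
    intro σ Δ g
    have h1 := ihA σ Δ g
    have h2 := ihB (lift σ) _ (hG.lift_tm .comp _ g)
    simp at h1 h2 ⊢
    exact .sigma_wf h1 h2
  | coprod_wf _ _ ihA ihB =>
    intro σ Δ g
    have h1 := ihA σ Δ g
    have h2 := ihB σ Δ g
    simp at h1 h2 ⊢
    exact .coprod_wf h1 h2
  | set_wf _ _ ihA ihφ =>
    intro σ Δ g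
    have h1 := ihA σ Δ g
    have h2 := ihφ (lift σ) _ (hG.lift_tm .comp _ g)
    simp at h1 h2 ⊢
    exact .set_wf h1 h2
  | pre_wf _ _ ihφ ihA =>
    intro σ Δ g
    have h1 := ihφ σ Δ g
    have h2 := ihA (lift σ) _ (hG.lift_pf _ g)
    simp at h1 h2 ⊢
    exact .pre_wf h1 h2
  | inter_wf _ _ ihA ihB =>
    intro σ Δ g
    have h1 := ihA σ Δ g
    have h2 := ihB (lift σ) _ (hG.lift_tm .comp _ g)
    simp at h1 h2 ⊢
    exact .inter_wf h1 h2
  | union_wf _ _ ihA ihB =>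
    intro σ Δ g
    have h1 := ihA σ Δ g
    have h2 := ihB (lift σ) _ (hG.lift_tm .comp _ g)
    simp at h1 h2 ⊢
    exact .union_wf h1 h2
  | top_wf => intro σ Δ g; simp; exact .top_wf
  | bot_wf => intro σ Δ g; simp; exact .bot_wf
  | dimp_wf _ _ ihφ ihψ =>
    intro σ Δ g
    have h1 := ihφ σ Δ g
    have h2 := ihψ (lift σ) _ (hG.lift_pf _ g)
    simp at h1 h2 ⊢
    exact .dimp_wf h1 h2
  | dand_wf _ _ ihφ ihψ =>
    intro σ Δ g
    have h1 := ihφ σ Δ g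
    have h2 := ihψ (lift σ) _ (hG.lift_pf _ g)
    simp at h1 h2 ⊢
    exact .dand_wf h1 h2
  | or_wf _ _ ihφ ihψ =>
    intro σ Δ g
    have h1 := ihφ σ Δ g
    have h2 := ihψ σ Δ g
    simp at h1 h2 ⊢
    exact .or_wf h1 h2
  | all_wf _ _ ihA ihφ =>
    intro σ Δ g
    have h1 := ihA σ Δ g
    have h2 := ihφ (lift σ) _ (hG.lift_tm .comp _ g)
    simp at h1 h2 ⊢
    exact .all_wf h1 h2
  | ex_wf _ _ ihA ihφ =>
    intro σ Δ g
    have h1 := ihA σ Δ g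
    have h2 := ihφ (lift σ) _ (hG.lift_tm .comp _ g)
    simp at h1 h2 ⊢
    exact .ex_wf h1 h2
  | eq_wf _ _ _ ihA iha ihb =>
    intro σ Δ g
    have h1 := ihA σ Δ g
    have h2 := iha σ _ (hG.upg g)
    have h3 := ihb σ _ (hG.upg g)
    simp at h1 h2 h3 ⊢
    exact .eq_wf h1 h2 h3
  | var hv =>
    intro σ Δ g
    have := hG.var_tm g hv
    simpa using this
  | nil_intro => intro σ Δ g; simp; exact .nil_intro
  | zero => intro σ Δ g; simp; exact .zero
  | succ => intro σ Δ g; simp; exact .succ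
  | abort _ ih =>
    intro σ Δ g
    have h1 := ih σ Δ g
    simp at h1 ⊢
    exact .abort h1
  | lam _ ih =>
    intro σ Δ g
    have h1 := ih (lift σ) _ (hG.lift_tm .comp _ g)
    simp at h1 ⊢
    exact .lam h1
  | app _ _ ihf iha =>
    intro σ Δ g
    have h1 := ihf σ Δ g
    have h2 := iha σ Δ g
    simp at h1 h2 ⊢
    exact .app h1 h2
  | pair _ _ ihl ihr =>
    intro σ Δ g
    have h1 := ihl σ Δ g
    have h2 := ihr σ Δ g
    simp at h1 h2 ⊢
    exact .pair h1 h2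
  | letPair _ _ _ ihe ihC ihe' =>
    intro σ Δ g
    have h1 := ihe σ Δ g
    have h2 := ihC (lift σ) _ (hG.lift_tm .comp _ g)
    have h3 := ihe' (lift (lift σ)) _ (hG.lift_tm .comp _ (hG.lift_tm .comp _ g))
    simp at h1 h2 h3 ⊢
    exact .letPair h1 h2 h3
  | inl _ ih =>
    intro σ Δ g
    have h1 := ih σ Δ g
    simp at h1 ⊢
    exact .inl h1
  | inr _ ih =>
    intro σ Δ g
    have h1 := ih σ Δ g
    simp at h1 ⊢
    exact .inr h1
  | cases _ _ _ _ ihC ihe ihl ihr =>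
    intro σ Δ g
    have h1 := ihC (lift σ) _ (hG.lift_tm .comp _ g)
    have h2 := ihe σ Δ g
    have h3 := ihl (lift σ) _ (hG.lift_tm .comp _ g)
    have h4 := ihr (lift σ) _ (hG.lift_tm .comp _ g)
    simp at h1 h2 h3 h4 ⊢
    exact .cases h1 h2 h3 h4
  | lamPr _ ih =>
    intro σ Δ g
    have h1 := ih (lift σ) _ (hG.lift_pf _ g)
    simp at h1 ⊢
    exact .lamPr h1
  | appPr _ _ ihf ihp =>
    intro σ Δ g
    have h1 := ihf σ Δ g
    have h2 := ihp σ Δ g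
    simp at h1 h2 ⊢
    exact .appPr h1 h2
  | elem _ _ iha ihp =>
    intro σ Δ g
    have h1 := iha σ Δ g
    have h2 := ihp σ Δ g
    simp at h1 h2 ⊢
    exact .elem h1 h2
  | letSet _ _ _ ihe ihC ihe' =>
    intro σ Δ g
    have h1 := ihe σ Δ g
    have h2 := ihC (lift σ) _ (hG.lift_tm .comp _ g)
    have h3 := ihe' (lift (lift σ)) _ (hG.lift_pf _ (hG.lift_tm .comp _ g))
    simp at h1 h2 h3 ⊢
    exact .letSet h1 h2 h3
  | lamIr _ ih =>
    intro σ Δ g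
    have h1 := ih (lift σ) _ (hG.lift_tm .ghost _ g)
    simp at h1 ⊢
    exact .lamIr h1
  | appIr _ _ ihf iha =>
    intro σ Δ g
    have h1 := ihf σ Δ g
    have h2 := iha σ _ (hG.upg g)
    simp at h1 h2 ⊢
    exact .appIr h1 h2
  | repr _ _ iha ihb =>
    intro σ Δ g
    have h1 := iha σ _ (hG.upg g)
    have h2 := ihb σ Δ g
    simp at h1 h2 ⊢
    exact .repr h1 h2
  | letRepr _ _ _ ihe ihC ihe' =>
    intro σ Δ g
    have h1 := ihe σ Δ g
    have h2 := ihC (lift σ) _ (hG.lift_tm .comp _ g)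
    have h3 := ihe' (lift (lift σ)) _ (hG.lift_tm .comp _ (hG.lift_tm .ghost _ g))
    simp at h1 h2 h3 ⊢
    exact .letRepr h1 h2 h3
  | natrec _ _ _ _ ihC ihe ihz ihs =>
    intro σ Δ g
    have h1 := ihC (lift σ) _ (hG.lift_tm .comp _ g)
    have h2 := ihe σ Δ g
    have h3 := ihz σ Δ g
    have h4 := ihs (lift (lift σ)) _ (hG.lift_tm .comp _ (hG.lift_tm .ghost _ g))
    simp at h1 h2 h3 h4 ⊢
    exact .natrec h1 h2 h3 h4
  | pvar hv =>
    intro σ Δ g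
    have := hG.var_pf g hv
    simpa using this
  | triv => intro σ Δ g; simp; exact .triv
  | pabort _ ih =>
    intro σ Δ g
    have h1 := ih σ Δ g
    simp at h1 ⊢
    exact .pabort h1
  | plam _ ih =>
    intro σ Δ g
    have h1 := ih (lift σ) _ (hG.lift_pf _ g)
    simp at h1 ⊢
    exact .plam h1
  | pmp _ _ ihp ihq =>
    intro σ Δ g
    have h1 := ihp σ Δ g
    have h2 := ihq σ Δ g
    simp at h1 h2 ⊢
    exact .pmp h1 h2
  | pconj _ _ ihp ihq =>
    intro σ Δ g
    have h1 := ihp σ Δ g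
    have h2 := ihq σ Δ g
    simp at h1 h2 ⊢
    exact .pconj h1 h2
  | pletConj _ _ _ ihp ihθ ihq =>
    intro σ Δ g
    have h1 := ihp σ Δ g
    have h2 := ihθ (lift σ) _ (hG.lift_pf _ g)
    have h3 := ihq (lift (lift σ)) _ (hG.lift_pf _ (hG.lift_pf _ g))
    simp at h1 h2 h3 ⊢
    exact .pletConj h1 h2 h3
  | porl _ ih =>
    intro σ Δ g
    have h1 := ih σ Δ g
    simp at h1 ⊢
    exact .porl h1
  | porr _ ih =>
    intro σ Δ g
    have h1 := ih σ Δ g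
    simp at h1 ⊢
    exact .porr h1
  | pcasesOr _ _ _ _ ihθ ihp ihl ihr =>
    intro σ Δ g
    have h1 := ihθ (lift σ) _ (hG.lift_pf _ g)
    have h2 := ihp σ Δ g
    have h3 := ihl (lift σ) _ (hG.lift_pf _ g)
    have h4 := ihr (lift σ) _ (hG.lift_pf _ g)
    simp at h1 h2 h3 h4 ⊢
    exact .pcasesOr h1 h2 h3 h4
  | pgen _ ih =>
    intro σ Δ g
    have h1 := ih (lift σ) _ (hG.lift_tm .ghost _ g)
    simp at h1 ⊢
    exact .pgen h1
  | pspec _ _ ihp iha =>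
    intro σ Δ g
    have h1 := ihp σ Δ g
    have h2 := iha σ _ (hG.upg g)
    simp at h1 h2 ⊢
    exact .pspec h1 h2
  | pwit _ _ iha ihp =>
    intro σ Δ g
    have h1 := iha σ _ (hG.upg g)
    have h2 := ihp σ Δ g
    simp at h1 h2 ⊢
    exact .pwit h1 h2
  | pletWit _ _ _ ihp ihψ ihq =>
    intro σ Δ g
    have h1 := ihp σ Δ g
    have h2 := ihψ (lift σ) _ (hG.lift_pf _ g)
    have h3 := ihq (lift (lift σ)) _ (hG.lift_pf _ (hG.lift_tm .comp _ g))
    simp at h1 h2 h3 ⊢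
    exact .pletWit h1 h2 h3
  | pletPair _ _ _ ihe ihφ ihq =>
    intro σ Δ g
    have h1 := ihe σ _ (hG.upg g)
    have h2 := ihφ (lift σ) _ (hG.lift_tm .comp _ g)
    have h3 := ihq (lift (lift σ)) _ (hG.lift_tm .comp _ (hG.lift_tm .comp _ g))
    simp at h1 h2 h3 ⊢
    exact .pletPair h1 h2 h3
  | pletSet _ _ _ ihe ihψ ihq =>
    intro σ Δ g
    have h1 := ihe σ _ (hG.upg g)
    have h2 := ihψ (lift σ) _ (hG.lift_tm .comp _ g)
    have h3 := ihq (lift (lift σ)) _ (hG.lift_pf _ (hG.lift_tm .comp _ g))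
    simp at h1 h2 h3 ⊢
    exact .pletSet h1 h2 h3
  | pletRepr _ _ _ ihe ihψ ihq =>
    intro σ Δ g
    have h1 := ihe σ _ (hG.upg g)
    have h2 := ihψ (lift σ) _ (hG.lift_tm .comp _ g)
    have h3 := ihq (lift (lift σ)) _ (hG.lift_tm .comp _ (hG.lift_tm .comp _ g))
    simp at h1 h2 h3 ⊢
    exact .pletRepr h1 h2 h3
  | psubst _ _ _ _ iha ihb ihp ihq =>
    intro σ Δ g
    have h1 := iha σ _ (hG.upg g)
    have h2 := ihb σ _ (hG.upg g)
    have h3 := ihp σ Δ g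
    have h4 := ihq σ Δ g
    simp at h1 h2 h3 h4 ⊢
    exact .psubst h1 h2 h3 h4
  | pcases _ _ _ _ ihφ ihe ihl ihr =>
    intro σ Δ g
    have h1 := ihφ (lift σ) _ (hG.lift_tm .comp _ g)
    have h2 := ihe σ Δ g
    have h3 := ihl (lift σ) _ (hG.lift_tm .comp _ g)
    have h4 := ihr (lift σ) _ (hG.lift_tm .comp _ g)
    simp at h1 h2 h3 h4 ⊢
    exact .pcases h1 h2 h3 h4
  | pind _ _ _ _ ihφ ihe ihz ihs =>
    intro σ Δ g
    have h1 := ihφ (lift σ) _ (hG.lift_tm .comp _ g)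
    have h2 := ihe σ _ (hG.upg g)
    have h3 := ihz σ Δ g
    have h4 := ihs (lift (lift σ)) _ (hG.lift_pf _ (hG.lift_tm .comp _ g))
    simp at h1 h2 h3 h4 ⊢
    exact .pind h1 h2 h3 h4
  | prfl _ ih =>
    intro σ Δ g
    have h1 := ih σ _ (hG.upg g)
    simp at h1 ⊢
    exact .prfl h1
  | puniq _ ih =>
    intro σ Δ g
    have h1 := ih σ _ (hG.upg g)
    simp at h1 ⊢
    exact .puniq h1
  | pdiscr _ _ _ iha ihb ihp =>
    intro σ Δ g
    have h1 := iha σ _ (hG.upg g)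
    have h2 := ihb σ _ (hG.upg g)
    have h3 := ihp σ Δ g
    simp at h1 h2 h3 ⊢
    exact .pdiscr h1 h2 h3
  | pbetaPr _ _ ihe ihp =>
    intro σ Δ g
    have h1 := ihe (lift σ) _ (hG.lift_pf _ (hG.upg g))
    have h2 := ihp σ Δ g
    simp at h1 h2 ⊢
    exact .pbetaPr h1 h2
  | pbetaTy _ _ ihe iha =>
    intro σ Δ g
    have h1 := ihe (lift σ) _ (hG.lift_tm .comp _ (hG.upg g))
    have h2 := iha σ _ (hG.upg g)
    simp at h1 h2 ⊢
    exact .pbetaTy h1 h2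
  | pbetaIr _ _ ihe iha =>
    intro σ Δ g
    have h1 := ihe (lift σ) _ (hG.lift_tm .comp _ (hG.upg g))
    have h2 := iha σ _ (hG.upg g)
    simp at h1 h2 ⊢
    exact .pbetaIr h1 h2
  | pbetaLeft _ _ _ iha ihl ihr =>
    intro σ Δ g
    have h1 := iha σ _ (hG.upg g)
    have h2 := ihl (lift σ) _ (hG.lift_tm .comp _ (hG.upg g))
    have h3 := ihr (lift σ) _ (hG.lift_tm .comp _ (hG.upg g))
    simp at h1 h2 h3 ⊢
    exact .pbetaLeft h1 h2 h3
  | pbetaRight _ _ _ ihb ihl ihr =>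
    intro σ Δ g
    have h1 := ihb σ _ (hG.upg g)
    have h2 := ihl (lift σ) _ (hG.lift_tm .comp _ (hG.upg g))
    have h3 := ihr (lift σ) _ (hG.lift_tm .comp _ (hG.upg g))
    simp at h1 h2 h3 ⊢
    exact .pbetaRight h1 h2 h3
  | pbetaZero _ _ ihz ihs =>
    intro σ Δ g
    have h1 := ihz σ _ (hG.upg g)
    have h2 := ihs (lift (lift σ)) _ (hG.lift_tm .comp _ (hG.lift_tm .comp _ (hG.upg g)))
    simp at h1 h2 ⊢
    exact .pbetaZero h1 h2
  | pbetaSucc _ _ _ ihe ihz ihs =>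
    intro σ Δ g
    have h1 := ihe σ _ (hG.upg g)
    have h2 := ihz σ _ (hG.upg g)
    have h3 := ihs (lift (lift σ)) _ (hG.lift_tm .comp _ (hG.lift_tm .comp _ (hG.upg g)))
    simp at h1 h2 h3 ⊢
    exact .pbetaSucc h1 h2 h3
  | pbetaPair _ _ _ iha ihb ihe =>
    intro σ Δ g
    have h1 := iha σ _ (hG.upg g)
    have h2 := ihb σ _ (hG.upg g)
    have h3 := ihe (lift (lift σ)) _ (hG.lift_tm .comp _ (hG.lift_tm .comp _ (hG.upg g)))
    simp at h1 h2 h3 ⊢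
    exact .pbetaPair h1 h2 h3
  | pbetaSet _ _ _ iha ihp ihe =>
    intro σ Δ g
    have h1 := iha σ _ (hG.upg g)
    have h2 := ihp σ _ (hG.upg g)
    have h3 := ihe (lift (lift σ)) _ (hG.lift_pf _ (hG.lift_tm .comp _ (hG.upg g)))
    simp at h1 h2 h3 ⊢
    exact .pbetaSet h1 h2 h3
  | pbetaRepr _ _ _ iha ihb ihe =>
    intro σ Δ g
    have h1 := iha σ _ (hG.upg g)
    have h2 := ihb σ _ (hG.upg g)
    have h3 := ihe (lift (lift σ)) _ (hG.lift_tm .comp _ (hG.lift_tm .comp _ (hG.upg g)))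
    simp at h1 h2 h3 ⊢
    exact .pbetaRepr h1 h2 h3
  | petaTy _ ih =>
    intro σ Δ g
    have h1 := ih σ _ (hG.upg g)
    simp at h1 ⊢
    exact .petaTy h1
  | pirPr _ _ _ _ ihA ihe ihp ihq =>
    intro σ Δ g
    have h1 := ihA σ Δ g
    have h2 := ihe (lift σ) _ (hG.lift_pf _ (hG.upg g))
    have h3 := ihp σ _ (hG.upg g)
    have h4 := ihq σ _ (hG.upg g)
    simp at h1 h2 h3 h4 ⊢
    exact .pirPr h1 h2 h3 h4
  | pirTy _ _ _ _ ihB ihe iha ihb =>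
    intro σ Δ g
    have h1 := ihB σ Δ g
    have h2 := ihe σ _ (hG.upg g)
    have h3 := iha σ _ (hG.upg g)
    have h4 := ihb σ _ (hG.upg g)
    simp at h1 h2 h3 h4 ⊢
    exact .pirTy h1 h2 h3 h4
  | petaIr _ _ _ _ ihf ihg ihi ihp =>
    intro σ Δ g
    have h1 := ihf σ _ (hG.upg g)
    have h2 := ihg σ _ (hG.upg g)
    have h3 := ihi σ _ (hG.upg g)
    have h4 := ihp (lift σ) _ (hG.lift_tm .comp _ g)
    simp at h1 h2 h3 h4 ⊢
    exact .petaIr h1 h2 h3 h4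
  | petaPr _ _ _ _ ihf ihg ihi ihp =>
    intro σ Δ g
    have h1 := ihf σ _ (hG.upg g)
    have h2 := ihg σ _ (hG.upg g)
    have h3 := ihi σ _ (hG.upg g)
    have h4 := ihp (lift σ) _ (hG.lift_pf _ g)
    simp at h1 h2 h3 h4 ⊢
    exact .petaPr h1 h2 h3 h4
/-- Renaming-like substitutions (every variable is mapped to a variable), up to upgrading. -/
def GRen (σ : ℕ → Tm) (Γ Δ : Ctx) : Prop :=
  (∀ n A, HasVar Γ n (.tm .comp A) → ∃ m, σ n = .var m ∧ HasVar Δ m (.tm .comp (A.subst σ))) ∧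
  (∀ n A, HasVar Γ n (.tm .ghost A) → ∃ m, σ n = .var m ∧
      (HasVar Δ m (.tm .ghost (A.subst σ)) ∨ HasVar Δ m (.tm .comp (A.subst σ)))) ∧
  (∀ n φ, HasVar Γ n (.pf φ) → ∃ m, σ n = .var m ∧ HasVar Δ m (.pf (φ.subst σ)))

theorem GRen.lift_tm {σ : ℕ → Tm} {Γ Δ : Ctx} (k : HypKind) (A : Tm) (g : GRen σ Γ Δ) :
    GRen (lift σ) (.tm k A :: Γ) (.tm k (A.subst σ) :: Δ) := by
  obtain ⟨gc, gg, gp⟩ := g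
  refine ⟨?_, ?_, ?_⟩
  · intro n A' h
    rcases hasVar_cons h with ⟨rfl, e⟩ | ⟨m', H'', rfl, e, h'⟩
    · rw [Hyp.wk_tm] at e
      injection e with e1 e2
      subst e2; subst e1
      refine ⟨0, rfl, ?_⟩
      rw [Tm.wk0_subst_lift]
      exact HasVar.head (H := .tm .comp (A.subst σ))
    · cases H'' with
      | tm k'' A'' =>
        rw [Hyp.wk_tm] at e
        injection e with e1 e2
        subst e2; subst e1
        obtain ⟨m, em, hv⟩ := gc m' A'' h'
        refine ⟨m + 1, ?_, ?_⟩
        · rw [Tm.lift_succ, em, Tm.wk0_var]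
        · rw [Tm.wk0_subst_lift]
          exact HasVar.tail hv
      | pf φ'' => rw [Hyp.wk_pf] at e; cases e
  · intro n A' h
    rcases hasVar_cons h with ⟨rfl, e⟩ | ⟨m', H'', rfl, e, h'⟩
    · rw [Hyp.wk_tm] at e
      injection e with e1 e2
      subst e2; subst e1
      refine ⟨0, rfl, .inl ?_⟩
      rw [Tm.wk0_subst_lift]
      exact HasVar.head (H := .tm .ghost (A.subst σ))
    · cases H'' with
      | tm k'' A'' =>
        rw [Hyp.wk_tm] at e
        injection e with e1 e2
        subst e2; subst e1
        obtain ⟨m, em, hv | hv⟩ := gg m' A'' h'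
        · refine ⟨m + 1, ?_, .inl ?_⟩
          · rw [Tm.lift_succ, em, Tm.wk0_var]
          · rw [Tm.wk0_subst_lift]; exact HasVar.tail hv
        · refine ⟨m + 1, ?_, .inr ?_⟩
          · rw [Tm.lift_succ, em, Tm.wk0_var]
          · rw [Tm.wk0_subst_lift]; exact HasVar.tail hv
      | pf φ'' => rw [Hyp.wk_pf] at e; cases e
  · intro n φ' h
    rcases hasVar_cons h with ⟨rfl, e⟩ | ⟨m', H'', rfl, e, h'⟩
    · rw [Hyp.wk_tm] at e; cases e
    · cases H'' with
      | tm k'' A'' => rw [Hyp.wk_tm] at e; cases e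
      | pf φ'' =>
        rw [Hyp.wk_pf] at e
        injection e with e1
        subst e1
        obtain ⟨m, em, hv⟩ := gp m' φ'' h'
        refine ⟨m + 1, ?_, ?_⟩
        · rw [Tm.lift_succ, em, Tm.wk0_var]
        · rw [Tm.wk0_subst_lift]
          exact HasVar.tail hv

theorem GRen.lift_pf {σ : ℕ → Tm} {Γ Δ : Ctx} (φ : Tm) (g : GRen σ Γ Δ) :
    GRen (lift σ) (.pf φ :: Γ) (.pf (φ.subst σ) :: Δ) := by
  obtain ⟨gc, gg, gp⟩ := g
  refine ⟨?_, ?_, ?_⟩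
  · intro n A' h
    rcases hasVar_cons h with ⟨rfl, e⟩ | ⟨m', H'', rfl, e, h'⟩
    · rw [Hyp.wk_pf] at e; cases e
    · cases H'' with
      | tm k'' A'' =>
        rw [Hyp.wk_tm] at e
        injection e with e1 e2
        subst e2; subst e1
        obtain ⟨m, em, hv⟩ := gc m' A'' h'
        refine ⟨m + 1, ?_, ?_⟩
        · rw [Tm.lift_succ, em, Tm.wk0_var]
        · rw [Tm.wk0_subst_lift]
          exact HasVar.tail hv
      | pf φ'' => rw [Hyp.wk_pf] at e; cases e
  · intro n A' h
    rcases hasVar_cons h with ⟨rfl, e⟩ | ⟨m', H'', rfl, e, h'⟩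
    · rw [Hyp.wk_pf] at e; cases e
    · cases H'' with
      | tm k'' A'' =>
        rw [Hyp.wk_tm] at e
        injection e with e1 e2
        subst e2; subst e1
        obtain ⟨m, em, hv | hv⟩ := gg m' A'' h'
        · refine ⟨m + 1, ?_, .inl ?_⟩
          · rw [Tm.lift_succ, em, Tm.wk0_var]
          · rw [Tm.wk0_subst_lift]; exact HasVar.tail hv
        · refine ⟨m + 1, ?_, .inr ?_⟩
          · rw [Tm.lift_succ, em, Tm.wk0_var]
          · rw [Tm.wk0_subst_lift]; exact HasVar.tail hv
      | pf φ'' => rw [Hyp.wk_pf] at e; cases e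
  · intro n φ' h
    rcases hasVar_cons h with ⟨rfl, e⟩ | ⟨m', H'', rfl, e, h'⟩
    · rw [Hyp.wk_pf] at e
      injection e with e1
      subst e1
      refine ⟨0, rfl, ?_⟩
      rw [Tm.wk0_subst_lift]
      exact HasVar.head (H := .pf (φ.subst σ))
    · cases H'' with
      | tm k'' A'' => rw [Hyp.wk_tm] at e; cases e
      | pf φ'' =>
        rw [Hyp.wk_pf] at e
        injection e with e1
        subst e1
        obtain ⟨m, em, hv⟩ := gp m' φ'' h'
        refine ⟨m + 1, ?_, ?_⟩
        · rw [Tm.lift_succ, em, Tm.wk0_var]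
        · rw [Tm.wk0_subst_lift]
          exact HasVar.tail hv

theorem GRen.upg' {σ : ℕ → Tm} {Γ Δ : Ctx} (g : GRen σ Γ Δ) : GRen σ (upg Γ) (upg Δ) := by
  obtain ⟨gc, gg, gp⟩ := g
  refine ⟨?_, ?_, ?_⟩
  · intro n A h
    obtain ⟨k, h'⟩ := hasVar_of_upg_tm h
    cases k with
    | comp =>
      obtain ⟨m, em, hv⟩ := gc n A h'
      exact ⟨m, em, hasVar_upg_tm hv⟩
    | ghost =>
      obtain ⟨m, em, hv | hv⟩ := gg n A h' <;> exact ⟨m, em, hasVar_upg_tm hv⟩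
  · intro n A h
    exact (hasVar_of_upg_ghost h).elim
  · intro n φ h
    obtain ⟨m, em, hv⟩ := gp n φ (hasVar_of_upg_pf h)
    exact ⟨m, em, hasVar_upg_pf hv⟩

theorem goodGRen : GoodFam GRen where
  var_tm g h := by
    obtain ⟨m, em, hv⟩ := g.1 _ _ h
    rw [em]
    exact .var hv
  var_pf g h := by
    obtain ⟨m, em, hv⟩ := g.2.2 _ _ h
    rw [em]
    exact .pvar hv
  lift_tm := GRen.lift_tm
  lift_pf := GRen.lift_pf
  upg := GRen.upg'

/-- Upgrading the context preserves all judgments. -/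
theorem judg_upg {Γ : Ctx} {t : Tm} {a : Annot} (h : Judg Γ t a) : Judg (upg Γ) t a := by
  have hg : GRen Tm.var Γ (upg Γ) := by
    refine ⟨?_, ?_, ?_⟩
    · intro n A h'
      exact ⟨n, rfl, by rw [Tm.subst_id]; exact hasVar_upg_tm h'⟩
    · intro n A h'
      exact ⟨n, rfl, .inr (by rw [Tm.subst_id]; exact hasVar_upg_tm h')⟩
    · intro n φ h'
      exact ⟨n, rfl, by rw [Tm.subst_id]; exact hasVar_upg_pf h'⟩
  have h2 := subst_judg goodGRen h Tm.var (upg Γ) hg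
  rw [Tm.subst_id] at h2
  cases a with
  | ty => exact h2
  | pr => exact h2
  | tm A => rw [show asubst (.tm A) Tm.var = .tm A from by rw [asubst_tm, Tm.subst_id]] at h2
            exact h2
  | pf φ => rw [show asubst (.pf φ) Tm.var = .pf φ from by rw [asubst_pf, Tm.subst_id]] at h2
            exact h2

theorem gren_wk (Δ : Ctx) (H : Hyp) : GRen (fun n => .var (n+1)) Δ (H :: Δ) := by
  refine ⟨?_, ?_, ?_⟩
  · intro n A h
    refine ⟨n + 1, rfl, ?_⟩
    rw [Tm.subst_ren' A _ Nat.succ (fun m => rfl)]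
    exact HasVar.tail h
  · intro n A h
    refine ⟨n + 1, rfl, .inl ?_⟩
    rw [Tm.subst_ren' A _ Nat.succ (fun m => rfl)]
    exact HasVar.tail h
  · intro n φ h
    refine ⟨n + 1, rfl, ?_⟩
    rw [Tm.subst_ren' φ _ Nat.succ (fun m => rfl)]
    exact HasVar.tail h

/-- Weakening for term typing. -/
theorem hasTy_wk {Δ : Ctx} {t A : Tm} (H : Hyp) (h : HasTy Δ t A) :
    HasTy (H :: Δ) t.wk0 A.wk0 := by
  have h2 := subst_judg goodGRen h (fun n => .var (n+1)) (H :: Δ) (gren_wk Δ H)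
  rw [Tm.subst_ren' t _ Nat.succ (fun m => rfl)] at h2
  rw [show asubst (.tm A) (fun n => Tm.var (n+1)) = .tm A.wk0 from by
    rw [asubst_tm, Tm.subst_ren' A _ Nat.succ (fun m => rfl)]; rfl] at h2
  exact h2

/-- Weakening for proof typing. -/
theorem hasPf_wk {Δ : Ctx} {t φ : Tm} (H : Hyp) (h : HasPf Δ t φ) :
    HasPf (H :: Δ) t.wk0 φ.wk0 := by
  have h2 := subst_judg goodGRen h (fun n => .var (n+1)) (H :: Δ) (gren_wk Δ H)
  rw [Tm.subst_ren' t _ Nat.succ (fun m => rfl)] at h2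
  rw [show asubst (.pf φ) (fun n => Tm.var (n+1)) = .pf φ.wk0 from by
    rw [asubst_pf, Tm.subst_ren' φ _ Nat.succ (fun m => rfl)]; rfl] at h2
  exact h2

theorem goodSubstWf : GoodFam SubstWf where
  var_tm g h := g.1 _ _ h
  var_pf g h := g.2.1 _ _ h
  lift_tm := by
    intro σ Γ Δ k A g
    obtain ⟨gc, gp, gg⟩ := g
    refine ⟨?_, ?_, ?_⟩
    · intro n A' h
      rcases hasVar_cons h with ⟨rfl, e⟩ | ⟨m', H'', rfl, e, h'⟩
      · rw [Hyp.wk_tm] at e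
        injection e with e1 e2
        subst e2; subst e1
        show HasTy _ (.var 0) _
        rw [Tm.wk0_subst_lift]
        exact .var (HasVar.head (H := .tm .comp (A.subst σ)))
      · cases H'' with
        | tm k'' A'' =>
          rw [Hyp.wk_tm] at e
          injection e with e1 e2
          subst e2; subst e1
          have h3 := hasTy_wk (.tm k (A.subst σ)) (gc m' A'' h')
          show HasTy _ ((σ m').wk0) _
          rw [Tm.wk0_subst_lift]
          exact h3
        | pf φ'' => rw [Hyp.wk_pf] at e; cases e
    · intro n φ' h
      rcases hasVar_cons h with ⟨rfl, e⟩ | ⟨m', H'', rfl, e, h'⟩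
      · rw [Hyp.wk_tm] at e; cases e
      · cases H'' with
        | tm k'' A'' => rw [Hyp.wk_tm] at e; cases e
        | pf φ'' =>
          rw [Hyp.wk_pf] at e
          injection e with e1
          subst e1
          have h3 := hasPf_wk (.tm k (A.subst σ)) (gp m' φ'' h')
          show HasPf _ ((σ m').wk0) _
          rw [Tm.wk0_subst_lift]
          exact h3
    · intro n A' h
      rcases hasVar_cons h with ⟨rfl, e⟩ | ⟨m', H'', rfl, e, h'⟩
      · rw [Hyp.wk_tm] at e
        injection e with e1 e2
        subst e2; subst e1
        refine .inl ⟨0, rfl, ?_⟩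
        rw [Tm.wk0_subst_lift]
        exact HasVar.head (H := .tm .ghost (A.subst σ))
      · cases H'' with
        | tm k'' A'' =>
          rw [Hyp.wk_tm] at e
          injection e with e1 e2
          subst e2; subst e1
          rcases gg m' A'' h' with ⟨m, em, hv⟩ | hty
          · refine .inl ⟨m + 1, ?_, ?_⟩
            · rw [Tm.lift_succ, em, Tm.wk0_var]
            · rw [Tm.wk0_subst_lift]
              exact HasVar.tail hv
          · refine .inr ?_
            have h3 := hasTy_wk (.tm k (A.subst σ)) hty
            show HasTy _ ((σ m').wk0) _
            rw [Tm.wk0_subst_lift]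
            exact h3
        | pf φ'' => rw [Hyp.wk_pf] at e; cases e
  lift_pf := by
    intro σ Γ Δ φ g
    obtain ⟨gc, gp, gg⟩ := g
    refine ⟨?_, ?_, ?_⟩
    · intro n A' h
      rcases hasVar_cons h with ⟨rfl, e⟩ | ⟨m', H'', rfl, e, h'⟩
      · rw [Hyp.wk_pf] at e; cases e
      · cases H'' with
        | tm k'' A'' =>
          rw [Hyp.wk_tm] at e
          injection e with e1 e2
          subst e2; subst e1
          have h3 := hasTy_wk (.pf (φ.subst σ)) (gc m' A'' h')
          show HasTy _ ((σ m').wk0) _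
          rw [Tm.wk0_subst_lift]
          exact h3
        | pf φ'' => rw [Hyp.wk_pf] at e; cases e
    · intro n φ' h
      rcases hasVar_cons h with ⟨rfl, e⟩ | ⟨m', H'', rfl, e, h'⟩
      · rw [Hyp.wk_pf] at e
        injection e with e1
        subst e1
        show HasPf _ (.var 0) _
        rw [Tm.wk0_subst_lift]
        exact .pvar (HasVar.head (H := .pf (φ.subst σ)))
      · cases H'' with
        | tm k'' A'' => rw [Hyp.wk_tm] at e; cases e
        | pf φ'' =>
          rw [Hyp.wk_pf] at e
          injection e with e1
          subst e1
          have h3 := hasPf_wk (.pf (φ.subst σ)) (gp m' φ'' h')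
          show HasPf _ ((σ m').wk0) _
          rw [Tm.wk0_subst_lift]
          exact h3
    · intro n A' h
      rcases hasVar_cons h with ⟨rfl, e⟩ | ⟨m', H'', rfl, e, h'⟩
      · rw [Hyp.wk_pf] at e; cases e
      · cases H'' with
        | tm k'' A'' =>
          rw [Hyp.wk_tm] at e
          injection e with e1 e2
          subst e2; subst e1
          rcases gg m' A'' h' with ⟨m, em, hv⟩ | hty
          · refine .inl ⟨m + 1, ?_, ?_⟩
            · rw [Tm.lift_succ, em, Tm.wk0_var]
            · rw [Tm.wk0_subst_lift]
              exact HasVar.tail hv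
          · refine .inr ?_
            have h3 := hasTy_wk (.pf (φ.subst σ)) hty
            show HasTy _ ((σ m').wk0) _
            rw [Tm.wk0_subst_lift]
            exact h3
        | pf φ'' => rw [Hyp.wk_pf] at e; cases e
  upg := by
    intro σ Γ Δ g
    obtain ⟨gc, gp, gg⟩ := g
    refine ⟨?_, ?_, ?_⟩
    · intro n A h
      obtain ⟨k, h'⟩ := hasVar_of_upg_tm h
      cases k with
      | comp => exact judg_upg (gc n A h')
      | ghost =>
        rcases gg n A h' with ⟨m, em, hv⟩ | hty
        · rw [em]
          exact .var (hasVar_upg_tm hv)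
        · exact judg_upg hty
    · intro n φ h
      exact judg_upg (gp n φ (hasVar_of_upg_pf h))
    · intro n A h
      exact (hasVar_of_upg_ghost h).elim

/-- **Lemma (Syntactic Substitution for λ_ert).** If `Γ ⊢' σ : Δ` is a well-formed
substitution and `Γ ⊢ a : A`, then `Δ ⊢ [σ]a : [σ]A`; similarly, if `Γ ⊢ p : φ`
then `Δ ⊢ [σ]p : [σ]φ`. -/
theorem syntactic_substitution :
    (∀ (Γ Δ : Ctx) (σ : ℕ → Tm) (a A : Tm),
      SubstWf σ Γ Δ → HasTy Γ a A → HasTy Δ (a.subst σ) (A.subst σ)) ∧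
    (∀ (Γ Δ : Ctx) (σ : ℕ → Tm) (p φ : Tm),
      SubstWf σ Γ Δ → HasPf Γ p φ → HasPf Δ (p.subst σ) (φ.subst σ)) := by
  constructor
  · intro Γ Δ σ a A hσ h
    exact subst_judg goodSubstWf h σ Δ hσ
  · intro Γ Δ σ p φ hσ h
    exact subst_judg goodSubstWf h σ Δ hσ

end Ert
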